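/- arXiv:1409.6627 — 8 statements merged into one kernel-verified Lean document; each statement's English description precedes it below -/
import Mathlib

section
/- Let E be a set and 𝒞, 𝒟 ⊆ 𝒫(E). Then there is a unique matroid M on ground set E such that every circuit of M belongs to 𝒞, every element of 𝒞 is a scrawl of M, every cocircuit of M (circuit of the dual matroid M*) belongs to 𝒟, and every element of 𝒟 is a scrawl of M*, if and only if 𝒞 and 𝒟 satisfy (O1), (O2) and (IM). -/
open Set

variable {α : Type*}

/-- Axiom (O1): `|C ∩ D| ≠ 1` for all `C ∈ 𝒞` and `D ∈ 𝒟`. -/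
def AxO1 (𝒞 𝒟 : Set (Set α)) : Prop :=
  ∀ C ∈ 𝒞, ∀ D ∈ 𝒟, (C ∩ D).encard ≠ 1

/-- Axiom (O2): for every partition `E = P ∪̇ Q ∪̇ {e}`, either `P + e` includes an element
of `𝒞` through `e` or `Q + e` includes an element of `𝒟` through `e`. -/
def AxO2 (E : Set α) (𝒞 𝒟 : Set (Set α)) : Prop :=
  ∀ P Q : Set α, ∀ e : α, Disjoint P Q → e ∉ P → e ∉ Q → P ∪ Q ∪ {e} = E →
    (∃ C ∈ 𝒞, e ∈ C ∧ C ⊆ P ∪ {e}) ∨ (∃ D ∈ 𝒟, e ∈ D ∧ D ⊆ Q ∪ {e})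

/-- The pair `(𝒞, 𝒟)` is tame: all intersections `C ∩ D` are finite. -/
def Tame (𝒞 𝒟 : Set (Set α)) : Prop :=
  ∀ C ∈ 𝒞, ∀ D ∈ 𝒟, (C ∩ D).Finite

/-- An orthogonality system on the ground set `E`: a tame pair of families of subsets of `E`
satisfying (O1) and (O2). -/
def OrthSys (E : Set α) (𝒞 𝒟 : Set (Set α)) : Prop :=
  (∀ C ∈ 𝒞, C ⊆ E) ∧ (∀ D ∈ 𝒟, D ⊆ E) ∧ Tame 𝒞 𝒟 ∧ AxO1 𝒞 𝒟 ∧ AxO2 E 𝒞 𝒟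

/-- A set `I` is independent (w.r.t. `𝒞`): it includes no nonempty element of `𝒞`. -/
def SIndep (𝒞 : Set (Set α)) (I : Set α) : Prop :=
  ∀ C ∈ 𝒞, C ⊆ I → C = ∅

/-- `B` is a base of `X` (w.r.t. `𝒞`): a maximal independent subset of `X`. -/
def IsBaseOf (𝒞 : Set (Set α)) (X B : Set α) : Prop :=
  B ⊆ X ∧ SIndep 𝒞 B ∧ ∀ J, SIndep 𝒞 J → J ⊆ X → B ⊆ J → J = B

/-- Axiom (IM): every independent set `I` extends to a base of every `X ⊇ I`. -/
def AxIM (E : Set α) (𝒞 : Set (Set α)) : Prop :=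
  ∀ I X : Set α, SIndep 𝒞 I → I ⊆ X → X ⊆ E → ∃ B, IsBaseOf 𝒞 X B ∧ I ⊆ B

/-- The restriction `𝒞↾X` of a family of sets to `X`. -/
def resF (𝒞 : Set (Set α)) (X : Set α) : Set (Set α) := {o ∈ 𝒞 | o ⊆ X}

/-- The contraction `𝒞.X` of a family of sets to `X`. -/
def conF (𝒞 : Set (Set α)) (X : Set α) : Set (Set α) := (· ∩ X) '' 𝒞

/-- Minimal nonempty elements of a family of sets. -/
def MinNE (𝒜 : Set (Set α)) (o : Set α) : Prop :=
  o ∈ 𝒜 ∧ o.Nonempty ∧ ∀ o' ∈ 𝒜, o'.Nonempty → o' ⊆ o → o' = o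

/-- `e` and `f` are in the same connected component: `e = f` or some minimal nonempty
element of `𝒞` contains both. -/
def SameComp (𝒞 : Set (Set α)) (e f : α) : Prop :=
  e = f ∨ ∃ o, MinNE 𝒞 o ∧ e ∈ o ∧ f ∈ o

/-- A circuit of a matroid: a minimal dependent set. -/
def MatCircuit (M : Matroid α) (C : Set α) : Prop := Minimal M.Dep C

/-- A scrawl of a matroid: a (possibly empty) union of circuits. -/
def MatScrawl (M : Matroid α) (S : Set α) : Prop :=
  ∃ 𝒪 : Set (Set α), (∀ C ∈ 𝒪, MatCircuit M C) ∧ S = ⋃₀ 𝒪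

/-!
If `M` exists, its independent sets are exactly the subsets of `E` containing no nonempty member
of `𝒞`: its circuits lie in `𝒞`, and members of `𝒞` are unions of circuits. This gives
uniqueness, (IM) from the maximality axiom of `M`, (O1) because a circuit and a cocircuit never
meet in a single element, and (O2) by taking at `e` either a circuit or a fundamental cocircuit.

Conversely, (O1) and (O2) give the augmentation axiom for this independence predicate and (IM)
its maximality axiom. In the resulting matroid, (O1) says that a member of `𝒟` avoiding `X`
avoids the closure of `X`, and (O2) puts every element outside that closure into such a member.
Hence the coindependent sets are those containing no nonempty member of `𝒟`, and every member
of `𝒞` (dually, of `𝒟`) is a union of circuits (cocircuits).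
-/

section Families

variable {𝒞 𝒟 : Set (Set α)} {E C D I J X B : Set α} {e f : α}

lemma SIndep.subset (hJ : SIndep 𝒞 J) (hIJ : I ⊆ J) : SIndep 𝒞 I :=
  fun C hC hCI => hJ C hC (hCI.trans hIJ)

lemma SIndep.mem_of_subset_insert (hI : SIndep 𝒞 I) (hC : C ∈ 𝒞) (hCne : C.Nonempty)
    (hCI : C ⊆ insert e I) : e ∈ C := by
  by_contra heC
  exact hCne.ne_empty (hI C hC fun x hx => (hCI hx).resolve_left fun h => heC (h ▸ hx))

lemma exists_mem_nonempty_subset_of_not_sindep (h : ¬ SIndep 𝒞 X) :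
    ∃ C ∈ 𝒞, C.Nonempty ∧ C ⊆ X := by
  simp only [SIndep, not_forall, ← nonempty_iff_ne_empty] at h
  obtain ⟨C, hC, hCX, hCne⟩ := h
  exact ⟨C, hC, hCne, hCX⟩

lemma isBaseOf_iff_maximal (hX : X ⊆ E) :
    IsBaseOf 𝒞 X B ↔ Maximal (fun J => (SIndep 𝒞 J ∧ J ⊆ E) ∧ J ⊆ X) B := by
  constructor
  · rintro ⟨hBX, hB, hmax⟩
    exact ⟨⟨⟨hB, hBX.trans hX⟩, hBX⟩, fun J hJ hBJ => (hmax J hJ.1.1 hJ.2 hBJ).le⟩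
  · rintro ⟨⟨⟨hB, -⟩, hBX⟩, hmax⟩
    exact ⟨hBX, hB, fun J hJ hJX hBJ => (hmax ⟨⟨hJ, hJX.trans hX⟩, hJX⟩ hBJ).antisymm hBJ⟩

lemma axIM_iff : AxIM E 𝒞 ↔
    ∀ X ⊆ E, Matroid.ExistsMaximalSubsetProperty (fun I => SIndep 𝒞 I ∧ I ⊆ E) X := by
  constructor
  · intro h X hX I hI hIX
    obtain ⟨B, hB, hIB⟩ := h I X hI.1 hIX hX
    exact ⟨B, hIB, (isBaseOf_iff_maximal hX).1 hB⟩
  · intro h I X hI hIX hX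
    obtain ⟨B, hIB, hB⟩ := h X hX I ⟨hI, hIX.trans hX⟩ hIX
    exact ⟨B, (isBaseOf_iff_maximal hX).2 hB, hIB⟩

lemma AxO1.symm (h : AxO1 𝒞 𝒟) : AxO1 𝒟 𝒞 := fun D hD C hC => by
  rw [inter_comm]
  exact h C hC D hD

lemma AxO1.anti {𝒞' 𝒟' : Set (Set α)} (h : AxO1 𝒞' 𝒟') (h𝒞 : 𝒞 ⊆ 𝒞') (h𝒟 : 𝒟 ⊆ 𝒟') :
    AxO1 𝒞 𝒟 :=
  fun C hC D hD => h C (h𝒞 hC) D (h𝒟 hD)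

lemma AxO1.exists_mem_inter_ne (h : AxO1 𝒞 𝒟) (hC : C ∈ 𝒞) (hD : D ∈ 𝒟) (heC : e ∈ C)
    (heD : e ∈ D) : ∃ f ∈ C ∩ D, f ≠ e := by
  have hne : C ∩ D ≠ {e} := fun h' => h C hC D hD (by simp [h'])
  exact ((nontrivial_iff_ne_singleton (mem_inter heC heD)).2 hne).exists_ne e

lemma AxO1.sindep_insert (h : AxO1 𝒞 𝒟) (hI : SIndep 𝒞 I) (hD : D ∈ 𝒟) (hfD : f ∈ D)
    (hDI : Disjoint D I) : SIndep 𝒞 (insert f I) := by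
  intro C hC hCI
  by_contra hCne
  have hfC := hI.mem_of_subset_insert hC (nonempty_iff_ne_empty.2 hCne) hCI
  obtain ⟨g, ⟨hgC, hgD⟩, hgf⟩ := h.exists_mem_inter_ne hC hD hfC hfD
  exact disjoint_left.1 hDI hgD ((hCI hgC).resolve_left hgf)

lemma AxO2.symm (h : AxO2 E 𝒞 𝒟) : AxO2 E 𝒟 𝒞 := fun P Q e hPQ heP heQ hE =>
  (h Q P e hPQ.symm heQ heP (by rwa [union_comm Q P])).symm

lemma AxO2.mono {𝒞' 𝒟' : Set (Set α)} (h : AxO2 E 𝒞 𝒟) (h𝒞 : 𝒞 ⊆ 𝒞') (h𝒟 : 𝒟 ⊆ 𝒟') :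
    AxO2 E 𝒞' 𝒟' := by
  intro P Q e hPQ heP heQ hE
  rcases h P Q e hPQ heP heQ hE with ⟨C, hC, hCe⟩ | ⟨D, hD, hDe⟩
  · exact Or.inl ⟨C, h𝒞 hC, hCe⟩
  · exact Or.inr ⟨D, h𝒟 hD, hDe⟩

/-- (O2) for the partition `E = I ∪̇ (E \ (I + e)) ∪̇ {e}`. -/
lemma AxO2.exists_mem_subset_sdiff (h : AxO2 E 𝒞 𝒟) (hI : SIndep 𝒞 (insert e I)) (hIE : I ⊆ E)
    (heE : e ∈ E) (heI : e ∉ I) : ∃ D ∈ 𝒟, e ∈ D ∧ D ⊆ E \ I := by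
  have hE : I ∪ (E \ insert e I) ∪ {e} = E := by
    ext x
    have := @hIE x
    by_cases hxe : x = e <;> simp_all; tauto
  rcases h I (E \ insert e I) e (disjoint_sdiff_right.mono_right (sdiff_subset_sdiff_right
      (subset_insert e I))) heI (fun h => h.2 (mem_insert e I)) hE with
    ⟨C, hC, heC, hCI⟩ | ⟨D, hD, heD, hDI⟩
  · rw [union_singleton] at hCI
    exact absurd (hI C hC hCI) (nonempty_iff_ne_empty.1 ⟨e, heC⟩)
  · refine ⟨D, hD, heD, fun x hx => ?_⟩
    rcases hDI hx with hx | rfl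
    · exact ⟨hx.1, fun hxI => hx.2 (mem_insert_of_mem e hxI)⟩
    · exact ⟨heE, heI⟩

/-- An `e` with `I + e` independent lies in some `D ∈ 𝒟` avoiding `I`, by (O2); a circuit of
`B + e` meets `D` in a second element `f ∈ B`, by (O1), and `I + f` is still independent. -/
lemma maximal_sindep_of_maximal_sindep_union (hO1 : AxO1 𝒞 𝒟) (hO2 : AxO2 E 𝒞 𝒟)
    (hB : Maximal (fun J => SIndep 𝒞 J ∧ J ⊆ E) B)
    (hI : Maximal (fun J => (SIndep 𝒞 J ∧ J ⊆ E) ∧ J ⊆ I ∪ B) I) :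
    Maximal (fun J => SIndep 𝒞 J ∧ J ⊆ E) I := by
  obtain ⟨⟨hIi, hIE⟩, -⟩ := hI.prop
  have hI_mem : ∀ x ∈ B, SIndep 𝒞 (insert x I) → x ∈ I := fun x hxB hx =>
    hI.mem_of_prop_insert ⟨⟨hx, insert_subset (hB.prop.2 hxB) hIE⟩,
      insert_subset (Or.inr hxB) subset_union_left⟩
  refine ⟨⟨hIi, hIE⟩, fun J hJ hIJ e heJ => by_contra fun heI => ?_⟩
  have heE : e ∈ E := hJ.2 heJ
  have hIe : SIndep 𝒞 (insert e I) := hJ.1.subset (insert_subset heJ hIJ)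
  obtain ⟨D, hD, heD, hDI⟩ := hO2.exists_mem_subset_sdiff hIe hIE heE heI
  have heB : e ∉ B := fun heB => heI (hI_mem e heB hIe)
  obtain ⟨C, hC, hCne, hCB⟩ := exists_mem_nonempty_subset_of_not_sindep fun h =>
    heB (hB.mem_of_prop_insert ⟨h, insert_subset heE hB.prop.2⟩)
  obtain ⟨f, ⟨hfC, hfD⟩, hfe⟩ :=
    hO1.exists_mem_inter_ne hC hD (hB.prop.1.mem_of_subset_insert hC hCne hCB) heD
  have hDI' : Disjoint D I := (subset_sdiff.1 hDI).2
  exact disjoint_left.1 hDI' hfD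
    (hI_mem f ((hCB hfC).resolve_left hfe) (hO1.sindep_insert hIi hD hfD hDI'))

end Families

namespace Matroid

variable {M : Matroid α} {𝒜 ℬ : Set (Set α)} {A D S X : Set α} {e : α}

def IndepIffSIndep (M : Matroid α) (𝒜 : Set (Set α)) : Prop :=
  ∀ I, M.Indep I ↔ SIndep 𝒜 I ∧ I ⊆ M.E

lemma exists_indepIffSIndep {E : Set α} {𝒞 𝒟 : Set (Set α)} (hO1 : AxO1 𝒞 𝒟)
    (hO2 : AxO2 E 𝒞 𝒟) (hIM : AxIM E 𝒞) :
    ∃ M : Matroid α, M.E = E ∧ M.IndepIffSIndep 𝒞 := by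
  have hdown : ∀ ⦃I J : Set α⦄, SIndep 𝒞 J ∧ J ⊆ E → I ⊆ J → SIndep 𝒞 I ∧ I ⊆ E :=
    fun I J hJ hIJ => ⟨hJ.1.subset hIJ, hIJ.trans hJ.2⟩
  refine ⟨(IndepMatroid.mk E (fun I => SIndep 𝒞 I ∧ I ⊆ E)
    ⟨fun C _ hC => subset_empty_iff.1 hC, empty_subset E⟩ hdown ?_ (axIM_iff.1 hIM)
    fun _ hI => hI.2).matroid, rfl, fun I => Iff.rfl⟩
  intro I B hI hInotmax hB
  obtain ⟨J, hIJ, hJ⟩ := axIM_iff.1 hIM (I ∪ B) (union_subset hI.2 hB.prop.2) I hI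
    subset_union_left
  by_cases hJI : J ⊆ I
  · obtain rfl := hIJ.antisymm hJI
    exact absurd (maximal_sindep_of_maximal_sindep_union hO1 hO2 hB hJ) hInotmax
  · obtain ⟨x, hxJ, hxI⟩ := not_subset.1 hJI
    exact ⟨x, ⟨(hJ.prop.2 hxJ).resolve_left hxI, hxI⟩,
      hdown hJ.prop.1 (insert_subset hxJ hIJ)⟩

lemma _root_.MatScrawl.exists_isCircuit (hS : MatScrawl M S) (he : e ∈ S) :
    ∃ C, M.IsCircuit C ∧ e ∈ C ∧ C ⊆ S := by
  obtain ⟨𝒪, h𝒪, rfl⟩ := hS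
  obtain ⟨C, hC, heC⟩ := mem_sUnion.1 he
  exact ⟨C, h𝒪 C hC, heC, subset_sUnion_of_mem hC⟩

lemma axO1_matScrawl (M : Matroid α) : AxO1 {S | MatScrawl M S} {T | MatScrawl M✶ T} := by
  intro S hS T hT hST
  obtain ⟨e, he⟩ := encard_eq_one.1 hST
  have heST : e ∈ S ∩ T := he ▸ mem_singleton e
  obtain ⟨C, hC, heC, hCS⟩ := hS.exists_isCircuit heST.1
  obtain ⟨K, hK, heK, hKT⟩ := hT.exists_isCircuit heST.2
  refine hC.inter_isCocircuit_ne_singleton hK (e := e) (subset_antisymm ?_ ?_)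
  · exact he ▸ inter_subset_inter hCS hKT
  · exact singleton_subset_iff.2 ⟨heC, heK⟩

/-- If `P` does not span `e`, extend a basis of `P` by `e` to a base `B`: the cocircuit
`E \ cl(B - e)` contains `e` and avoids `P`. -/
lemma axO2_isCircuit_isCocircuit (M : Matroid α) :
    AxO2 M.E {C | M.IsCircuit C} {K | M.IsCocircuit K} := by
  intro P Q e _ heP _ hE
  have hPE : P ⊆ M.E := hE ▸ subset_union_left.trans subset_union_left
  have heE : e ∈ M.E := hE ▸ Or.inr rfl
  rw [union_singleton, union_singleton]
  by_cases he : e ∈ M.closure P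
  · obtain ⟨C, hCP, hC, heC⟩ := M.exists_isCircuit_of_mem_closure he heP
    exact Or.inl ⟨C, hC, heC, hCP⟩
  obtain ⟨I, hI⟩ := M.exists_isBasis P hPE
  have heI : e ∉ I := fun h => heP (hI.subset h)
  have hIe : M.Indep (insert e I) :=
    (hI.indep.insert_indep_iff_of_notMem heI).2 ⟨heE, by rwa [hI.closure_eq_closure]⟩
  obtain ⟨B, hB, hIeB⟩ := hIe.exists_isBase_superset
  have heB : e ∈ B := hIeB (mem_insert e I)
  have hPcl : P ⊆ M.closure (B \ {e}) := hI.subset_closure.trans (M.closure_subset_closure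
    fun x hx => ⟨hIeB (mem_insert_of_mem e hx), fun h => heI (h ▸ hx)⟩)
  refine Or.inr ⟨_, hB.compl_closure_sdiff_singleton_isCocircuit heB,
    ⟨heE, hB.indep.notMem_closure_sdiff_of_mem heB⟩, fun x hx => ?_⟩
  rw [← hE] at hx
  rcases hx.1 with (hxP | hxQ) | rfl
  · exact absurd (hPcl hxP) hx.2
  · exact mem_insert_of_mem e hxQ
  · exact mem_insert _ _

lemma indepIffSIndep_of_isCircuit_mem (hcirc : ∀ C, M.IsCircuit C → C ∈ 𝒜)
    (hscr : ∀ A ∈ 𝒜, MatScrawl M A) : M.IndepIffSIndep 𝒜 := by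
  refine fun I => ⟨fun hI => ⟨fun A hA hAI => ?_, hI.subset_ground⟩, fun ⟨hI, hIE⟩ => ?_⟩
  · refine eq_empty_iff_forall_notMem.2 fun e he => ?_
    obtain ⟨C, hC, -, hCA⟩ := (hscr A hA).exists_isCircuit he
    exact hC.not_indep (hI.subset (hCA.trans hAI))
  · by_contra hdep
    obtain ⟨C, hCI, hC⟩ := ((not_indep_iff hIE).1 hdep).exists_isCircuit_subset
    exact hC.nonempty.ne_empty (hI C (hcirc C hC) hCI)

namespace IndepIffSIndep

lemma eq {M' : Matroid α} (h : M.IndepIffSIndep 𝒜) (h' : M'.IndepIffSIndep 𝒜)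
    (hE : M.E = M'.E) : M = M' :=
  ext_indep hE fun I _ => by rw [h I, h' I, hE]

lemma isCircuit_mem (h : M.IndepIffSIndep 𝒜) {C : Set α} (hC : M.IsCircuit C) : C ∈ 𝒜 := by
  obtain ⟨A, hA, hAne, hAC⟩ := exists_mem_nonempty_subset_of_not_sindep fun hCi =>
    hC.not_indep ((h C).2 ⟨hCi, hC.subset_ground⟩)
  have hAdep : M.Dep A := ⟨fun hAi => hAne.ne_empty (((h A).1 hAi).1 A hA Subset.rfl),
    hAC.trans hC.subset_ground⟩
  rwa [← hC.eq_of_dep_subset hAdep hAC]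

lemma disjoint_closure (h : M.IndepIffSIndep 𝒜) (hO1 : AxO1 𝒜 ℬ) (hD : D ∈ ℬ)
    (hDX : Disjoint D X) : Disjoint D (M.closure X) := by
  obtain ⟨I, hI⟩ := M.exists_isBasis' X
  have hDI : Disjoint D I := hDX.mono_right hI.subset
  rw [← hI.closure_eq_closure, disjoint_left]
  intro y hyD hycl
  have hyI : y ∉ I := disjoint_left.1 hDI hyD
  have hIy : M.Indep (insert y I) := (h _).2 ⟨hO1.sindep_insert ((h I).1 hI.indep).1 hD hyD hDI,
    insert_subset (M.closure_subset_ground I hycl) hI.indep.subset_ground⟩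
  exact ((hI.indep.insert_indep_iff_of_notMem hyI).1 hIy).2 hycl

lemma exists_mem_subset_sdiff_closure (h : M.IndepIffSIndep 𝒜) (hO1 : AxO1 𝒜 ℬ)
    (hO2 : AxO2 M.E 𝒜 ℬ) (he : e ∈ M.E \ M.closure X) :
    ∃ D ∈ ℬ, e ∈ D ∧ D ⊆ M.E \ M.closure X := by
  obtain ⟨I, hI⟩ := M.exists_isBasis' X
  rw [← hI.closure_eq_closure] at he ⊢
  have heI : e ∉ I := fun heI => he.2 (M.subset_closure I hI.indep.subset_ground heI)
  have hIe := ((h _).1 ((hI.indep.insert_indep_iff_of_notMem heI).2 he)).1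
  obtain ⟨D, hD, heD, hDI⟩ :=
    hO2.exists_mem_subset_sdiff hIe hI.indep.subset_ground he.1 heI
  obtain ⟨hDE, hDI⟩ := subset_sdiff.1 hDI
  exact ⟨D, hD, heD, subset_sdiff.2 ⟨hDE, h.disjoint_closure hO1 hD hDI⟩⟩

lemma dual (h : M.IndepIffSIndep 𝒜) (hO1 : AxO1 𝒜 ℬ) (hO2 : AxO2 M.E 𝒜 ℬ) :
    M✶.IndepIffSIndep ℬ := by
  intro K
  show M✶.Indep K ↔ SIndep ℬ K ∧ K ⊆ M.E
  refine ⟨fun hK => ⟨fun D hD hDK => ?_, hK.subset_ground⟩, fun ⟨hK, hKE⟩ => ?_⟩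
  · have hDcl := h.disjoint_closure hO1 hD
      ((disjoint_sdiff_right : Disjoint K (M.E \ K)).mono_left hDK)
    rw [Coindep.compl_spanning hK |>.closure_eq] at hDcl
    exact disjoint_self.1 (hDcl.mono_right (hDK.trans hK.subset_ground))
  · rw [← coindep_def, coindep_iff_compl_spanning hKE, spanning_iff_ground_subset_closure]
    intro e heE
    by_contra hecl
    obtain ⟨D, hD, heD, hDcl⟩ := h.exists_mem_subset_sdiff_closure hO1 hO2 ⟨heE, hecl⟩
    have hDK : D ⊆ K := fun x hx =>
      by_contra fun hxK => (hDcl hx).2 (M.subset_closure _ sdiff_subset ⟨(hDcl hx).1, hxK⟩)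
    exact (nonempty_iff_ne_empty.1 ⟨e, heD⟩) (hK D hD hDK)

/-- Each `x ∈ A` is spanned by `A - x`: otherwise (O2) puts `x` in a member of `ℬ` avoiding the
closure of `A - x`, which meets `A` in `x` alone. -/
lemma matScrawl (h : M.IndepIffSIndep 𝒜) (hO1 : AxO1 𝒜 ℬ) (hO2 : AxO2 M.E 𝒜 ℬ) (hA : A ∈ 𝒜)
    (hAE : A ⊆ M.E) : MatScrawl M A := by
  refine ⟨{C | M.IsCircuit C ∧ C ⊆ A}, fun _ hC => hC.1,
    subset_antisymm (fun x hx => ?_) (sUnion_subset fun _ hC => hC.2)⟩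
  have hxcl : x ∈ M.closure (A \ {x}) := by
    by_contra hxcl
    obtain ⟨D, hD, hxD, hDcl⟩ := h.exists_mem_subset_sdiff_closure hO1 hO2 ⟨hAE hx, hxcl⟩
    obtain ⟨y, ⟨hyA, hyD⟩, hyx⟩ := hO1.exists_mem_inter_ne hA hD hx hxD
    exact (hDcl hyD).2 (M.subset_closure _ (sdiff_subset.trans hAE) ⟨hyA, hyx⟩)
  obtain ⟨C, hCA, hC, hxC⟩ := M.exists_isCircuit_of_mem_closure hxcl fun h => h.2 rfl
  exact ⟨C, ⟨hC, hCA.trans (insert_subset hx sdiff_subset)⟩, hxC⟩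

end IndepIffSIndep

end Matroid

/-- For families `𝒞, 𝒟` of subsets of `E`, there is a unique matroid `M`
on ground set `E` with `𝒞(M) ⊆ 𝒞 ⊆ 𝒮(M)` and `𝒞(M✶) ⊆ 𝒟 ⊆ 𝒮(M✶)` if and only if
`𝒞` and `𝒟` satisfy (O1), (O2) and (IM). -/
theorem unique_matroid_iff_O1_O2_IM (E : Set α) (𝒞 𝒟 : Set (Set α))
    (h𝒞 : ∀ C ∈ 𝒞, C ⊆ E) (h𝒟 : ∀ D ∈ 𝒟, D ⊆ E) :
    (∃! M : Matroid α, M.E = E ∧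
        (∀ C, MatCircuit M C → C ∈ 𝒞) ∧ (∀ C ∈ 𝒞, MatScrawl M C) ∧
        (∀ D, MatCircuit M✶ D → D ∈ 𝒟) ∧ (∀ D ∈ 𝒟, MatScrawl M✶ D)) ↔
      (AxO1 𝒞 𝒟 ∧ AxO2 E 𝒞 𝒟 ∧ AxIM E 𝒞) := by
  constructor
  · rintro ⟨M, ⟨rfl, hC, hCs, hD, hDs⟩, -⟩
    have hM : M.IndepIffSIndep 𝒞 := Matroid.indepIffSIndep_of_isCircuit_mem hC hCs
    have hIndep : M.Indep = fun I => SIndep 𝒞 I ∧ I ⊆ M.E := funext fun I => propext (hM I)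
    exact ⟨M.axO1_matScrawl.anti hCs hDs, M.axO2_isCircuit_isCocircuit.mono hC hD,
      axIM_iff.2 (hIndep ▸ M.existsMaximalSubsetProperty_indep)⟩
  · rintro ⟨hO1, hO2, hIM⟩
    obtain ⟨M, rfl, hM⟩ := Matroid.exists_indepIffSIndep hO1 hO2 hIM
    have hM' : M✶.IndepIffSIndep 𝒟 := hM.dual hO1 hO2
    refine ⟨M, ⟨rfl, fun C => hM.isCircuit_mem, fun C hC => hM.matScrawl hO1 hO2 hC (h𝒞 C hC),
      fun D => hM'.isCircuit_mem, fun D hD => hM'.matScrawl hO1.symm hO2.symm hD (h𝒟 D hD)⟩, ?_⟩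
    rintro M' ⟨hE, hC, hCs, -⟩
    exact (Matroid.indepIffSIndep_of_isCircuit_mem hC hCs).eq hM hE
end

section
/- If (𝒞,𝒟) is an orthogonality system on a ground set E, then for any X ⊆ E both (𝒞,𝒟)↾X = (𝒞↾X, 𝒟.X) and (𝒞,𝒟).X = (𝒞.X, 𝒟↾X) are orthogonality systems on the ground set X. -/
open Set

variable {α : Type*}

lemma orthSys_symm {E : Set α} {𝒞 𝒟 : Set (Set α)} (h : OrthSys E 𝒞 𝒟) :
    OrthSys E 𝒟 𝒞 := by
  obtain ⟨hC, hD, ht, h1, h2⟩ := h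
  refine ⟨hD, hC, fun D hD' C hC' => ?_, fun D hD' C hC' => ?_, ?_⟩
  · rw [Set.inter_comm]; exact ht C hC' D hD'
  · rw [Set.inter_comm]; exact h1 C hC' D hD'
  · intro P Q e hPQ heP heQ hE
    rcases h2 Q P e hPQ.symm heQ heP (by rw [← hE]; ac_rfl) with h' | h'
    · exact Or.inr h'
    · exact Or.inl h'

lemma orthSys_res {E : Set α} {𝒞 𝒟 : Set (Set α)} (h : OrthSys E 𝒞 𝒟)
    {X : Set α} (hX : X ⊆ E) : OrthSys X (resF 𝒞 X) (conF 𝒟 X) := by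
  obtain ⟨hC, hD, ht, h1, h2⟩ := h
  refine ⟨fun C hC' => hC'.2, ?_, ?_, ?_, ?_⟩
  · rintro D ⟨D', hD', rfl⟩
    exact Set.inter_subset_right
  · rintro C ⟨hC', hCX⟩ D ⟨D', hD', rfl⟩
    exact (ht C hC' D' hD').subset (by intro x hx; exact ⟨hx.1, hx.2.1⟩)
  · rintro C ⟨hC', hCX⟩ D ⟨D', hD', rfl⟩
    have : C ∩ (D' ∩ X) = C ∩ D' := by
      ext x; exact ⟨fun hx => ⟨hx.1, hx.2.1⟩, fun hx => ⟨hx.1, hx.2, hCX hx.1⟩⟩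
    rw [this]; exact h1 C hC' D' hD'
  · intro P Q e hPQ heP heQ hE
    have heX : e ∈ X := by rw [← hE]; right; rfl
    have hPX : P ⊆ X := by rw [← hE]; intro x hx; left; left; exact hx
    have hQX : Q ⊆ X := by rw [← hE]; intro x hx; left; right; exact hx
    have hPQ' : Disjoint P (Q ∪ (E \ X)) :=
      Set.disjoint_union_right.2 ⟨hPQ, Set.disjoint_sdiff_right.mono_left hPX⟩
    have heQ' : e ∉ Q ∪ (E \ X) := by
      rintro (h' | h'); exact heQ h'; exact h'.2 heX
    have hE' : P ∪ (Q ∪ (E \ X)) ∪ {e} = E := by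
      apply Set.Subset.antisymm
      · rintro x ((hx | (hx | hx)) | hx)
        · exact hX (hPX hx)
        · exact hX (hQX hx)
        · exact hx.1
        · rcases hx with rfl; exact hX heX
      · intro x hx
        by_cases hxX : x ∈ X
        · have : x ∈ P ∪ Q ∪ {e} := hE.symm ▸ hxX
          rcases this with (h' | h') | h'
          · exact Or.inl (Or.inl h')
          · exact Or.inl (Or.inr (Or.inl h'))
          · exact Or.inr h'
        · exact Or.inl (Or.inr (Or.inr ⟨hx, hxX⟩))
    rcases h2 P (Q ∪ (E \ X)) e hPQ' heP heQ' hE' with ⟨C, hC', heC, hCP⟩ | ⟨D, hD', heD, hDQ⟩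
    · refine Or.inl ⟨C, ⟨hC', ?_⟩, heC, hCP⟩
      intro x hx
      rcases hCP hx with h' | h'
      · exact hPX h'
      · rcases h' with rfl; exact heX
    · refine Or.inr ⟨D ∩ X, ⟨D, hD', rfl⟩, ⟨heD, heX⟩, ?_⟩
      rintro x ⟨hxD, hxX⟩
      rcases hDQ hxD with (h' | h') | h'
      · exact Or.inl h'
      · exact absurd hxX h'.2
      · exact Or.inr h'

/-- If `(𝒞,𝒟)` is an orthogonality system on `E`, then for any `X ⊆ E`
both `(𝒞,𝒟)↾X = (𝒞↾X, 𝒟.X)` and `(𝒞,𝒟).X = (𝒞.X, 𝒟↾X)` are orthogonality systems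
on the ground set `X`. -/
theorem orthSys_minor (E : Set α) (𝒞 𝒟 : Set (Set α)) (h : OrthSys E 𝒞 𝒟)
    (X : Set α) (hX : X ⊆ E) :
    OrthSys X (resF 𝒞 X) (conF 𝒟 X) ∧ OrthSys X (conF 𝒞 X) (resF 𝒟 X) :=
  ⟨orthSys_res h hX, orthSys_symm (orthSys_res (orthSys_symm h) hX)⟩
end

section
/- Let (𝒞,𝒟) be an orthogonality system on a ground set E such that for any two disjoint subsets A and B of E the orthogonality system (𝒞,𝒟)/A∖B has a base. Then (𝒞,𝒟) satisfies (IM). -/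
open Set

variable {α : Type*}

/-- If `(𝒞,𝒟)` is an orthogonality system on `E` such that for any two
disjoint subsets `A, B` of `E` the orthogonality system `(𝒞,𝒟)/A∖B` (with ground set
`E ∖ (A ∪ B)`) has a base, then `(𝒞,𝒟)` satisfies (IM). -/
theorem orthSys_IM_of_bases (E : Set α) (𝒞 𝒟 : Set (Set α)) (h : OrthSys E 𝒞 𝒟)
    (hbase : ∀ A B : Set α, A ⊆ E → B ⊆ E → Disjoint A B →
      ∃ B', IsBaseOf (resF (conF 𝒞 (E \ A)) (E \ (A ∪ B))) (E \ (A ∪ B)) B') :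
    AxIM E 𝒞 := by
  obtain ⟨hCE, -, -, -, -⟩ := h
  intro I X hI hIX hXE
  obtain ⟨B', hB'⟩ := hbase I (E \ X) (hIX.trans hXE) diff_subset
    (disjoint_sdiff_right.mono_left hIX)
  have hgs : E \ (I ∪ (E \ X)) = X \ I := by
    rw [Set.union_comm, ← Set.diff_diff, Set.diff_diff_right_self,
      Set.inter_eq_self_of_subset_right hXE]
  rw [hgs] at hB'
  obtain ⟨hB'sub, hB'ind, hB'max⟩ := hB'
  refine ⟨I ∪ B', ⟨?_, ?_, ?_⟩, subset_union_left⟩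
  · exact union_subset hIX (hB'sub.trans diff_subset)
  · intro C hC hCsub
    have hmem : C ∩ (E \ I) ∈ resF (conF 𝒞 (E \ I)) (X \ I) := by
      refine ⟨⟨C, hC, rfl⟩, ?_⟩
      intro x ⟨hxC, hxE, hxI⟩
      rcases hCsub hxC with h1 | h2
      · exact absurd h1 hxI
      · exact ⟨hB'sub h2 |>.1, hxI⟩
    have h0 : C ∩ (E \ I) = ∅ := by
      refine hB'ind _ hmem ?_
      intro x ⟨hxC, _, hxI⟩
      rcases hCsub hxC with h1 | h2
      · exact absurd h1 hxI
      · exact h2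
    have hCI : C ⊆ I := by
      intro x hxC
      by_contra hxI
      exact absurd (Set.eq_empty_iff_forall_notMem.1 h0 x) (by
        simp [hxC, hCE C hC hxC, hxI])
    exact hI C hC hCI
  · intro J hJ hJX hsub
    have hJ'ind : SIndep (resF (conF 𝒞 (E \ I)) (X \ I)) (J \ I) := by
      rintro o ⟨⟨C, hC, rfl⟩, hoX⟩ hoJ
      have hCJ : C ⊆ J := by
        intro x hxC
        by_cases hxI : x ∈ I
        · exact hsub (Or.inl hxI)
        · exact (hoJ ⟨hxC, hCE C hC hxC, hxI⟩).1
      have := hJ C hC hCJ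
      simp [this]
    have hJ'X : J \ I ⊆ X \ I := Set.diff_subset_diff_left hJX
    have hB'J : B' ⊆ J \ I := by
      intro x hx
      exact ⟨hsub (Or.inr hx), (hB'sub hx).2⟩
    have hJ'eq : J \ I = B' := hB'max _ hJ'ind hJ'X hB'J
    have : I ⊆ J := fun x hx => hsub (Or.inl hx)
    rw [← hJ'eq, Set.union_diff_self, Set.union_eq_self_of_subset_left this]
end

section
/- Let (𝒞,𝒟) be an orthogonality system on a ground set E. A set B ⊆ E is a base of (𝒞,𝒟) if and only if for each x ∈ E∖B there is some o ∈ 𝒞 with x ∈ o ⊆ B + x, and for each x ∈ B there is some d ∈ 𝒟 with x ∈ d ⊆ (E∖B) + x. -/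
open Set

variable {α : Type*}

/-- In an orthogonality system `(𝒞,𝒟)` on `E`, a set `B ⊆ E` is a base
if and only if each `x ∈ E ∖ B` lies in some `o ∈ 𝒞` with `o ⊆ B + x` and each `x ∈ B`
lies in some `d ∈ 𝒟` with `d ⊆ (E ∖ B) + x`. -/
theorem base_characterisation (E : Set α) (𝒞 𝒟 : Set (Set α)) (h : OrthSys E 𝒞 𝒟)
    (B : Set α) (hB : B ⊆ E) :
    IsBaseOf 𝒞 E B ↔
      ((∀ x ∈ E \ B, ∃ o ∈ 𝒞, x ∈ o ∧ o ⊆ B ∪ {x}) ∧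
       (∀ x ∈ B, ∃ d ∈ 𝒟, x ∈ d ∧ d ⊆ (E \ B) ∪ {x})) := by
  obtain ⟨hCE, hDE, -, hO1, hO2⟩ := h
  constructor
  · rintro ⟨-, hind, hmax⟩
    constructor
    · rintro x ⟨hxE, hxB⟩
      by_cases hI : SIndep 𝒞 (B ∪ {x})
      · have hsub : B ∪ {x} ⊆ E := by
          intro y hy
          rcases hy with hy | hy
          · exact hB hy
          · simp only [mem_singleton_iff] at hy; subst hy; exact hxE
        have := hmax _ hI hsub subset_union_left
        exact absurd (this ▸ (mem_union_right B rfl : x ∈ B ∪ {x})) hxB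
      · simp only [SIndep, not_forall] at hI
        obtain ⟨C, hC𝒞, hCsub, hCne⟩ := hI
        have hxC : x ∈ C := by
          by_contra hxC
          refine hCne (hind C hC𝒞 ?_)
          intro y hyC
          rcases hCsub hyC with hy | hy
          · exact hy
          · simp only [mem_singleton_iff] at hy; subst hy; exact absurd hyC hxC
        exact ⟨C, hC𝒞, hxC, hCsub⟩
    · intro x hx
      have hdisj : Disjoint (B \ {x}) (E \ B) := by
        exact (disjoint_sdiff_right (s := B) (t := E)).mono_left diff_subset
      have hU : B \ {x} ∪ E \ B ∪ {x} = E := by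
        ext y
        simp only [mem_union, mem_diff, mem_singleton_iff]
        constructor
        · rintro ((⟨h1, -⟩ | ⟨h1, -⟩) | rfl)
          · exact hB h1
          · exact h1
          · exact hB hx
        · intro hyE
          by_cases hyB : y ∈ B
          · by_cases hyx : y = x
            · exact Or.inr hyx
            · exact Or.inl (Or.inl ⟨hyB, hyx⟩)
          · exact Or.inl (Or.inr ⟨hyE, hyB⟩)
      rcases hO2 (B \ {x}) (E \ B) x hdisj (fun hh => hh.2 rfl) (fun hh => hh.2 hx) hU with
        ⟨C, hC𝒞, hxC, hCsub⟩ | ⟨D, hD𝒟, hxD, hDsub⟩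
      · exfalso
        have hCB : C ⊆ B := by
          intro y hyC
          rcases hCsub hyC with hy | hy
          · exact hy.1
          · simp only [mem_singleton_iff] at hy; subst hy; exact hx
        have := hind C hC𝒞 hCB
        rw [this] at hxC
        exact hxC
      · exact ⟨D, hD𝒟, hxD, hDsub⟩
  · rintro ⟨h1, h2⟩
    have hind : SIndep 𝒞 B := by
      intro C hC hCB
      by_contra hne
      obtain ⟨x, hxC⟩ := nonempty_iff_ne_empty.mpr hne
      have hxB : x ∈ B := hCB hxC
      obtain ⟨d, hd𝒟, hxd, hdsub⟩ := h2 x hxB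
      have key : C ∩ d = {x} := by
        apply subset_antisymm
        · rintro y ⟨hyC, hyd⟩
          rcases hdsub hyd with hy | hy
          · exact absurd (hCB hyC) hy.2
          · exact hy
        · rintro y rfl
          exact ⟨hxC, hxd⟩
      have := hO1 C hC d hd𝒟
      rw [key, encard_singleton] at this
      exact this rfl
    refine ⟨hB, hind, fun J hJ hJE hBJ => ?_⟩
    apply subset_antisymm _ hBJ
    intro y hyJ
    by_contra hyB
    obtain ⟨o, ho𝒞, hyo, hosub⟩ := h1 y ⟨hJE hyJ, hyB⟩
    have hoJ : o ⊆ J := by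
      intro z hzo
      rcases hosub hzo with hz | hz
      · exact hBJ hz
      · simp only [mem_singleton_iff] at hz; subst hz; exact hyJ
    have := hJ o ho𝒞 hoJ
    rw [this] at hyo
    exact hyo
end

section
/- Let (𝒞,𝒟) be an orthogonality system on a ground set E. Define e, f ∈ E to be in the same connected component if e = f or there is a minimal nonempty element o of 𝒞 (minimal with respect to inclusion among nonempty elements of 𝒞) with e ∈ o and f ∈ o. Then this relation is an equivalence relation on E. Moreover, for distinct e and f, there is a minimal nonempty element of 𝒞 containing both e and f if and only if there is a minimal nonempty element of 𝒟 containing both e and f. -/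
open Set

variable {α : Type*}

namespace OrthProof

variable {E : Set α} {𝒞 𝒟 : Set (Set α)}

lemma swap (h : OrthSys E 𝒞 𝒟) : OrthSys E 𝒟 𝒞 := by
  obtain ⟨hC, hD, ht, h1, h2⟩ := h
  refine ⟨hD, hC, ?_, ?_, ?_⟩
  · intro D hD' C hC'
    rw [Set.inter_comm]; exact ht C hC' D hD'
  · intro D hD' C hC'
    rw [Set.inter_comm]; exact h1 C hC' D hD'
  · intro P Q e hdis heP heQ huni
    rcases h2 Q P e hdis.symm heQ heP (by rw [← huni]; ext x; simp; tauto) with hc | hd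
    · exact Or.inr hc
    · exact Or.inl hd

/-- Painting form of O2. -/
lemma paint (h : OrthSys E 𝒞 𝒟) {e : α} {R : Set α} (he : e ∈ E) (hRE : R ⊆ E)
    (heR : e ∉ R) :
    (∃ C ∈ 𝒞, e ∈ C ∧ C ⊆ R ∪ {e}) ∨ (∃ D ∈ 𝒟, e ∈ D ∧ D ∩ R = ∅) := by
  obtain ⟨hC, hD, ht, h1, h2⟩ := h
  have huni : R ∪ (E \ (R ∪ {e})) ∪ {e} = E := by
    ext x
    simp only [Set.mem_union, Set.mem_diff, Set.mem_singleton_iff]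
    constructor
    · rintro ((hx | ⟨hx, _⟩) | rfl)
      · exact hRE hx
      · exact hx
      · exact he
    · intro hx
      by_cases hxR : x ∈ R
      · tauto
      · by_cases hxe : x = e <;> tauto
  have hdis : Disjoint R (E \ (R ∪ {e})) := by
    rw [Set.disjoint_left]; intro x hx hx'; exact hx'.2 (Or.inl hx)
  rcases h2 R (E \ (R ∪ {e})) e hdis heR (by simp) huni with hc | ⟨D, hD', heD, hsub⟩
  · exact Or.inl hc
  · refine Or.inr ⟨D, hD', heD, ?_⟩
    ext x
    simp only [Set.mem_inter_iff, Set.mem_empty_iff_false, iff_false, not_and]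
    intro hxD hxR
    rcases hsub hxD with h' | h'
    · exact h'.2 (Or.inl hxR)
    · exact heR (by rwa [Set.mem_singleton_iff.1 h'] at hxR)

lemma force_pair {s : Set α} {a b : α} (hne : a ≠ b) (hs : s ⊆ {a, b}) (ha : a ∈ s)
    (h1 : s.encard ≠ 1) : s = {a, b} := by
  have hb : b ∈ s := by
    by_contra hb
    apply h1
    have hsa : s = {a} := by
      apply subset_antisymm
      · intro x hx
        rcases hs hx with h' | h'
        · exact h'
        · exact absurd (Set.mem_singleton_iff.1 h' ▸ hx) hb
      · simpa using ha
    simp [hsa]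
  refine subset_antisymm hs ?_
  rintro x (rfl | rfl) <;> assumption

/-- Every element of a member of `𝒟` lies in a minimal nonempty member of `𝒟`
inside it. -/
lemma exists_minNE (h : OrthSys E 𝒞 𝒟) {d0 : Set α} (hd0 : d0 ∈ 𝒟) {g : α} (hg : g ∈ d0) :
    ∃ m, MinNE 𝒟 m ∧ g ∈ m ∧ m ⊆ d0 := by
  classical
  have hgE : g ∈ E := h.2.1 d0 hd0 hg
  set T : Set (Set α) := {d | d ∈ 𝒟 ∧ g ∈ d ∧ d ⊆ d0} with hT
  have hzorn : ∃ m, m ⊆ d0 ∧ Minimal (· ∈ T) m := by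
    apply zorn_superset_nonempty
    · intro c hcT hchain hcne
      obtain ⟨da, hda⟩ := hcne
      have hgω : g ∈ ⋂₀ c := by
        intro d hd; exact (hcT hd).2.1
      rcases paint h hgE (Set.diff_subset) (fun hx => hx.2 hgω)
          (R := E \ ⋂₀ c) with ⟨C, hC, hgC, hCsub⟩ | ⟨D, hD', hgD, hDR⟩
      · exfalso
        -- stabilization of traces along the chain
        set F : Set ℕ := (fun d => (C ∩ d).ncard) '' c with hF
        have hFne : F.Nonempty := ⟨_, ⟨da, hda, rfl⟩⟩
        obtain ⟨d1, hd1c, hd1n⟩ := Nat.sInf_mem hFne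
        have hfin : ∀ d ∈ c, (C ∩ d).Finite := fun d hd => h.2.2.1 C hC d (hcT hd).1
        have hmin : ∀ d ∈ c, C ∩ d1 ⊆ C ∩ d := by
          intro d hd
          rcases eq_or_ne d1 d with rfl | hne
          · exact subset_rfl
          · rcases hchain hd1c hd hne with h' | h'
            · exact Set.inter_subset_inter_right _ h'
            · have hd1n' : (C ∩ d1).ncard = sInf F := hd1n
              have hle : (C ∩ d1).ncard ≤ (C ∩ d).ncard := by
                rw [hd1n']; exact Nat.sInf_le ⟨d, hd, rfl⟩
              have := Set.eq_of_subset_of_ncard_le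
                (Set.inter_subset_inter_right _ h') hle (hfin d1 hd1c)
              rw [this]
        have hsub1 : C ∩ d1 ⊆ {g} := by
          intro x hx
          have hxω : x ∈ ⋂₀ c := fun d hd => (hmin d hd hx).2
          rcases hCsub hx.1 with h' | h'
          · exact absurd hxω h'.2
          · exact h'
        have heq : C ∩ d1 = {g} := subset_antisymm hsub1 (by
          simp only [Set.singleton_subset_iff]
          exact ⟨hgC, (hgω d1 hd1c)⟩)
        exact h.2.2.2.1 C hC d1 (hcT hd1c).1 (by rw [heq]; simp)
      · have hDω : D ⊆ ⋂₀ c := by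
          intro x hx
          by_contra hxω
          have hxE : x ∈ E := h.2.1 D hD' hx
          have : x ∈ D ∩ (E \ ⋂₀ c) := ⟨hx, hxE, hxω⟩
          rw [hDR] at this; exact this
        exact ⟨D, ⟨hD', hgD, hDω.trans ((Set.sInter_subset_of_mem hda).trans (hcT hda).2.2)⟩,
          fun s hs => hDω.trans (Set.sInter_subset_of_mem hs)⟩
    · exact ⟨hd0, hg, subset_rfl⟩
  obtain ⟨m, hmd0, hmmin⟩ := hzorn
  obtain ⟨hm𝒟, hgm, hmd0'⟩ := hmmin.1
  have hmE : m ⊆ E := h.2.1 m hm𝒟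
  have hminT : ∀ a ∈ T, a ⊆ m → a = m := by
    intro a ha hsub
    exact subset_antisymm hsub (hmmin.2 ha hsub)
  have pairsep : ∀ x ∈ m, x ≠ g → ∃ C ∈ 𝒞, C ∩ m = {g, x} := by
    intro x hxm hxg
    rcases paint h hgE (R := (E \ m) ∪ {x})
        (Set.union_subset Set.diff_subset (by simpa using hmE hxm))
        (by
          rintro (hg' | hg')
          · exact hg'.2 hgm
          · exact hxg (Set.mem_singleton_iff.1 hg').symm)
        with ⟨C, hC, hgC, hCsub⟩ | ⟨D, hD', hgD, hDR⟩
    · refine ⟨C, hC, force_pair (fun hgx => hxg hgx.symm) ?_ ⟨hgC, hgm⟩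
        (h.2.2.2.1 C hC m hm𝒟)⟩
      intro y hy
      rcases hCsub hy.1 with (h' | h') | h'
      · exact absurd hy.2 h'.2
      · exact Or.inr h'
      · exact Or.inl h'
    · exfalso
      have hDm : D ⊆ m := by
        intro y hy
        by_contra hym
        have : y ∈ D ∩ ((E \ m) ∪ {x}) := ⟨hy, Or.inl ⟨h.2.1 D hD' hy, hym⟩⟩
        rw [hDR] at this; exact this
      have hxD : x ∉ D := by
        intro hxD
        have : x ∈ D ∩ ((E \ m) ∪ {x}) := ⟨hxD, Or.inr rfl⟩
        rw [hDR] at this; exact this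
      have : D = m := hminT D ⟨hD', hgD, hDm.trans hmd0'⟩ hDm
      exact hxD (this ▸ hxm)
  refine ⟨m, ⟨hm𝒟, ⟨g, hgm⟩, ?_⟩, hgm, hmd0'⟩
  intro d' hd' hd'ne hsub
  by_cases hgd' : g ∈ d'
  · exact hminT d' ⟨hd', hgd', hsub.trans hmd0'⟩ hsub
  · exfalso
    obtain ⟨x, hx⟩ := hd'ne
    have hxg : x ≠ g := fun h' => hgd' (h' ▸ hx)
    obtain ⟨C, hC, hCm⟩ := pairsep x (hsub hx) hxg
    have hxC : x ∈ C := by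
      have : x ∈ C ∩ m := by rw [hCm]; exact Or.inr rfl
      exact this.1
    have hCd' : C ∩ d' = {x} := by
      apply subset_antisymm
      · intro y hy
        have : y ∈ C ∩ m := ⟨hy.1, hsub hy.2⟩
        rw [hCm] at this
        rcases this with h' | h'
        · exact absurd (h' ▸ hy.2) hgd'
        · exact h'
      · simp only [Set.singleton_subset_iff]
        exact ⟨hxC, hx⟩
    exact h.2.2.2.1 C hC d' hd' (by rw [hCd']; simp)

/-- Pair-trace lemma: for a minimal nonempty `o ∈ 𝒞` and `e ≠ f` in `o`, there is a
minimal nonempty `d ∈ 𝒟` with `d ∩ o = {e, f}`. -/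
lemma pair_trace (h : OrthSys E 𝒞 𝒟) {o : Set α} (ho : MinNE 𝒞 o) {e f : α}
    (he : e ∈ o) (hf : f ∈ o) (hef : e ≠ f) :
    ∃ d, MinNE 𝒟 d ∧ d ∩ o = {e, f} := by
  have hoE : o ⊆ E := h.1 o ho.1
  rcases paint h (hoE he) (R := o \ {e, f}) (Set.diff_subset.trans hoE)
      (fun hx => hx.2 (Or.inl rfl)) with ⟨C, hC, heC, hCsub⟩ | ⟨D, hD', heD, hDR⟩
  · exfalso
    have hCo : C ⊆ o := by
      intro x hx
      rcases hCsub hx with h' | h'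
      · exact h'.1
      · exact Set.mem_singleton_iff.1 h' ▸ he
    have : C = o := ho.2.2 C hC ⟨e, heC⟩ hCo
    have hfC : f ∈ C := this ▸ hf
    rcases hCsub hfC with h' | h'
    · exact h'.2 (Or.inr rfl)
    · exact hef (Set.mem_singleton_iff.1 h').symm
  · have hDo : D ∩ o ⊆ {e, f} := by
      intro x hx
      by_contra hx'
      have : x ∈ D ∩ (o \ {e, f}) := ⟨hx.1, hx.2, hx'⟩
      rw [hDR] at this; exact this
    obtain ⟨m, hm, hem, hmD⟩ := exists_minNE h hD' heD
    refine ⟨m, hm, force_pair hef (fun x hx => hDo ⟨hmD hx.1, hx.2⟩) ⟨hem, he⟩ ?_⟩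
    have := h.2.2.2.1 o ho.1 m hm.1
    rwa [Set.inter_comm] at this

/-- Circuit elimination. -/
lemma elim' (h : OrthSys E 𝒞 𝒟) {d1 d2 : Set α} (h1 : d1 ∈ 𝒟) (h2 : d2 ∈ 𝒟) {z g : α}
    (hz : z ∈ d1 ∩ d2) (hg1 : g ∈ d1) (hg2 : g ∉ d2) :
    ∃ D ∈ 𝒟, g ∈ D ∧ D ⊆ d1 ∪ d2 ∧ z ∉ D := by
  have hgz : g ≠ z := fun h' => hg2 (h' ▸ hz.2)
  have hgE : g ∈ E := h.2.1 d1 h1 hg1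
  rcases paint h hgE (R := (E \ (d1 ∪ d2)) ∪ {z})
      (Set.union_subset Set.diff_subset (by simpa using h.2.1 d1 h1 hz.1))
      (by
        rintro (hg' | hg')
        · exact hg'.2 (Or.inl hg1)
        · exact hgz hg')
      with ⟨C, hC, hgC, hCsub⟩ | ⟨D, hD', hgD, hDR⟩
  · exfalso
    have hCd1 : C ∩ d1 ⊆ {g, z} := by
      intro x hx
      rcases hCsub hx.1 with (h' | h') | h'
      · exact absurd (Or.inl hx.2) h'.2
      · exact Or.inr h'
      · exact Or.inl h'
    have hCd1' : C ∩ d1 = {g, z} := force_pair hgz hCd1 ⟨hgC, hg1⟩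
      (h.2.2.2.1 C hC d1 h1)
    have hzC : z ∈ C := by
      have : z ∈ C ∩ d1 := by rw [hCd1']; exact Or.inr rfl
      exact this.1
    have hCd2 : C ∩ d2 = {z} := by
      apply subset_antisymm
      · intro x hx
        rcases hCsub hx.1 with (h' | h') | h'
        · exact absurd (Or.inr hx.2) h'.2
        · exact h'
        · exact absurd (Set.mem_singleton_iff.1 h' ▸ hx.2) hg2
      · simp only [Set.singleton_subset_iff]
        exact ⟨hzC, hz.2⟩
    exact h.2.2.2.1 C hC d2 h2 (by rw [hCd2]; simp)
  · refine ⟨D, hD', hgD, ?_, ?_⟩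
    · intro x hx
      by_contra hx'
      have : x ∈ D ∩ ((E \ (d1 ∪ d2)) ∪ {z}) := ⟨hx, Or.inl ⟨h.2.1 D hD' hx, hx'⟩⟩
      rw [hDR] at this; exact this
    · intro hzD
      have : z ∈ D ∩ ((E \ (d1 ∪ d2)) ∪ {z}) := ⟨hzD, Or.inr rfl⟩
      rw [hDR] at this; exact this

/-- Restriction minor. -/
lemma restrict_orth (h : OrthSys E 𝒞 𝒟) {X : Set α} (hXE : X ⊆ E) :
    OrthSys X (resF 𝒞 X) (conF 𝒟 X) := by
  obtain ⟨hC, hD, ht, h1, h2⟩ := h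
  refine ⟨?_, ?_, ?_, ?_, ?_⟩
  · intro C hC'; exact hC'.2
  · rintro D ⟨D', _, rfl⟩; exact Set.inter_subset_right
  · rintro C hC' D ⟨D', hD', rfl⟩
    exact (ht C hC'.1 D' hD').subset (by
      intro x hx; exact ⟨hx.1, hx.2.1⟩)
  · rintro C hC' D ⟨D', hD', rfl⟩
    have : C ∩ (D' ∩ X) = C ∩ D' := by
      ext x; constructor
      · rintro ⟨hx1, hx2, _⟩; exact ⟨hx1, hx2⟩
      · rintro ⟨hx1, hx2⟩; exact ⟨hx1, hx2, hC'.2 hx1⟩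
    rw [this]; exact h1 C hC'.1 D' hD'
  · intro P Q e hdis heP heQ huni
    have hPX : P ⊆ X := by rw [← huni]; intro x hx; exact Or.inl (Or.inl hx)
    have hQX : Q ⊆ X := by rw [← huni]; intro x hx; exact Or.inl (Or.inr hx)
    have heX : e ∈ X := by rw [← huni]; exact Or.inr rfl
    have hdis' : Disjoint P (Q ∪ (E \ X)) := by
      rw [Set.disjoint_union_right]
      exact ⟨hdis, Set.disjoint_left.2 fun x hx hx' => hx'.2 (hPX hx)⟩
    have huni' : P ∪ (Q ∪ (E \ X)) ∪ {e} = E := by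
      ext x
      simp only [Set.mem_union, Set.mem_diff, Set.mem_singleton_iff]
      constructor
      · rintro ((hx | hx | ⟨hx, _⟩) | rfl)
        · exact hXE (hPX hx)
        · exact hXE (hQX hx)
        · exact hx
        · exact hXE heX
      · intro hx
        by_cases hxX : x ∈ X
        · have : x ∈ P ∪ Q ∪ {e} := huni ▸ hxX
          rcases this with (h' | h') | h' <;> tauto
        · tauto
    rcases h2 P (Q ∪ (E \ X)) e hdis' heP
        (by rintro (h' | h'); exact heQ h'; exact h'.2 heX) huni' with
        ⟨C, hC', heC, hCsub⟩ | ⟨D, hD', heD, hDsub⟩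
    · refine Or.inl ⟨C, ⟨hC', ?_⟩, heC, hCsub⟩
      intro x hx
      rcases hCsub hx with h' | h'
      · exact hPX h'
      · exact Set.mem_singleton_iff.1 h' ▸ heX
    · refine Or.inr ⟨D ∩ X, ⟨D, hD', rfl⟩, ⟨heD, heX⟩, ?_⟩
      intro x hx
      rcases hDsub hx.1 with (h' | h') | h'
      · exact Or.inl h'
      · exact absurd hx.2 h'.2
      · exact Or.inr h'

/-- Core finite induction (Oxley-style): two linked minimal nonempty members of `𝒟`
with finite union yield a common minimal nonempty member through given elements. -/
lemma core (h : OrthSys E 𝒞 𝒟) :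
    ∀ n : ℕ, ∀ d1 d2 : Set α, MinNE 𝒟 d1 → MinNE 𝒟 d2 → (d1 ∪ d2).Finite →
      (d1 ∪ d2).ncard ≤ n → ∀ e y : α, e ∈ d1 → y ∈ d2 → e ≠ y → (d1 ∩ d2).Nonempty →
      ∃ d, MinNE 𝒟 d ∧ e ∈ d ∧ y ∈ d := by
  intro n
  induction n with
  | zero =>
    intro d1 d2 hm1 hm2 hfin hcard e y he _ _ _
    exfalso
    have : (d1 ∪ d2).ncard = 0 := Nat.le_zero.1 hcard
    have hemp : d1 ∪ d2 = ∅ := (Set.ncard_eq_zero hfin).1 this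
    exact (Set.eq_empty_iff_forall_notMem.1 hemp e) (Or.inl he)
  | succ n IH =>
    intro d1 d2 hm1 hm2 hfin hcard e y he hy hey hlink
    by_cases hyd1 : y ∈ d1
    · exact ⟨d1, hm1, he, hyd1⟩
    by_cases hed2 : e ∈ d2
    · exact ⟨d2, hm2, hed2, hy⟩
    obtain ⟨x, hx⟩ := hlink
    obtain ⟨D, hD, heD, hDsub, hxD⟩ := elim' h hm1.1 hm2.1 hx he hed2
    obtain ⟨d', hm', hed', hd'D⟩ := exists_minNE h hD heD
    have hd'sub : d' ⊆ d1 ∪ d2 := hd'D.trans hDsub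
    have hxd' : x ∉ d' := fun hh => hxD (hd'D hh)
    by_cases hyd' : y ∈ d'
    · exact ⟨d', hm', hed', hyd'⟩
    obtain ⟨D'', hD'', hyD'', hD''sub, hxD''⟩ :=
      elim' h hm2.1 hm1.1 ⟨hx.2, hx.1⟩ hy hyd1
    obtain ⟨d'', hm'', hyd'', hd''D⟩ := exists_minNE h hD'' hyD''
    have hd''sub : d'' ⊆ d1 ∪ d2 := by
      intro p hp
      rcases hD''sub (hd''D hp) with h' | h'
      · exact Or.inr h'
      · exact Or.inl h'
    have hxd'' : x ∉ d'' := fun hh => hxD'' (hd''D hh)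
    by_cases hed'' : e ∈ d''
    · exact ⟨d'', hm'', hed'', hyd''⟩
    have hd'w : ∃ w, w ∈ d' ∧ w ∈ d2 := by
      by_contra hno
      push_neg at hno
      have hsub1 : d' ⊆ d1 := by
        intro p hp
        rcases hd'sub hp with h' | h'
        · exact h'
        · exact absurd h' (hno p hp)
      have : d' = d1 := hm1.2.2 d' hm'.1 ⟨e, hed'⟩ hsub1
      exact hxd' (this ▸ hx.1)
    have hd''u : ∃ u, u ∈ d'' ∧ u ∈ d1 := by
      by_contra hno
      push_neg at hno
      have hsub1 : d'' ⊆ d2 := by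
        intro p hp
        rcases hd''sub hp with h' | h'
        · exact absurd h' (hno p hp)
        · exact h'
      have : d'' = d2 := hm2.2.2 d'' hm''.1 ⟨y, hyd''⟩ hsub1
      exact hxd'' (this ▸ hx.2)
    by_cases hdd : (d' ∩ d'').Nonempty
    · have hss : d' ∪ d'' ⊂ d1 ∪ d2 := by
        constructor
        · exact Set.union_subset hd'sub hd''sub
        · intro hcon
          have : x ∈ d' ∪ d'' := hcon (Or.inl hx.1)
          rcases this with h' | h'
          · exact hxd' h'
          · exact hxd'' h'
      have hlt : (d' ∪ d'').ncard < (d1 ∪ d2).ncard := Set.ncard_lt_ncard hss hfin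
      exact IH d' d'' hm' hm'' (hfin.subset hss.subset) (by omega) e y hed' hyd'' hey hdd
    · by_cases hα : d' ∪ d2 = d1 ∪ d2
      · by_cases hβ : d1 ∪ d'' = d1 ∪ d2
        · exfalso
          have h21 : ∀ p, p ∈ d2 → p ∉ d1 → p ∈ d'' := by
            intro p hp hp1
            have : p ∈ d1 ∪ d'' := hβ ▸ (Or.inr hp : p ∈ d1 ∪ d2)
            rcases this with h' | h'
            · exact absurd h' hp1
            · exact h'
          have hsub1 : d' ⊆ d1 := by
            intro p hp
            rcases hd'sub hp with h' | h'
            · exact h'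
            · by_cases hp1 : p ∈ d1
              · exact hp1
              · exact absurd (⟨p, hp, h21 p h' hp1⟩ : (d' ∩ d'').Nonempty) hdd
          have : d' = d1 := hm1.2.2 d' hm'.1 ⟨e, hed'⟩ hsub1
          exact hxd' (this ▸ hx.1)
        · have hss : d1 ∪ d'' ⊂ d1 ∪ d2 :=
            ⟨Set.union_subset Set.subset_union_left hd''sub, fun hcon =>
              hβ (subset_antisymm (Set.union_subset Set.subset_union_left hd''sub) hcon)⟩
          have hlt : (d1 ∪ d'').ncard < (d1 ∪ d2).ncard := Set.ncard_lt_ncard hss hfin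
          obtain ⟨u, hu'', hu1⟩ := hd''u
          exact IH d1 d'' hm1 hm'' (hfin.subset hss.subset) (by omega) e y he hyd'' hey
            ⟨u, hu1, hu''⟩
      · have hss : d' ∪ d2 ⊂ d1 ∪ d2 :=
          ⟨Set.union_subset hd'sub Set.subset_union_right, fun hcon =>
            hα (subset_antisymm (Set.union_subset hd'sub Set.subset_union_right) hcon)⟩
        have hlt : (d' ∪ d2).ncard < (d1 ∪ d2).ncard := Set.ncard_lt_ncard hss hfin
        obtain ⟨w, hw', hw2⟩ := hd'w
        exact IH d' d2 hm' hm2 (hfin.subset hss.subset) (by omega) e y hed' hy hey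
          ⟨w, hw', hw2⟩

/-- Transitivity: two-chain collapse. -/
lemma two_chain (h : OrthSys E 𝒞 𝒟) {o1 o2 : Set α} (h1 : MinNE 𝒞 o1) (h2 : MinNE 𝒞 o2)
    {e x y : α} (he : e ∈ o1) (hx1 : x ∈ o1) (hx2 : x ∈ o2) (hy : y ∈ o2) (hey : e ≠ y) :
    ∃ o, MinNE 𝒞 o ∧ e ∈ o ∧ y ∈ o := by
  by_cases hyo1 : y ∈ o1
  · exact ⟨o1, h1, he, hyo1⟩
  by_cases heo2 : e ∈ o2
  · exact ⟨o2, h2, heo2, hy⟩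
  have hex : e ≠ x := fun h' => heo2 (h' ▸ hx2)
  have hxy : x ≠ y := fun h' => hyo1 (h' ▸ hx1)
  set X := o1 ∪ o2 with hXdef
  have hXE : X ⊆ E := Set.union_subset (h.1 o1 h1.1) (h.1 o2 h2.1)
  have hX := restrict_orth h hXE
  have h1X : MinNE (resF 𝒞 X) o1 :=
    ⟨⟨h1.1, Set.subset_union_left⟩, h1.2.1, fun o' ho' => h1.2.2 o' ho'.1⟩
  have h2X : MinNE (resF 𝒞 X) o2 :=
    ⟨⟨h2.1, Set.subset_union_right⟩, h2.2.1, fun o' ho' => h2.2.2 o' ho'.1⟩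
  obtain ⟨d1, hd1m, hd1o⟩ := pair_trace hX h1X he hx1 hex
  obtain ⟨d2, hd2m, hd2o⟩ := pair_trace hX h2X hx2 hy hxy
  have hed1 : e ∈ d1 := by
    have : e ∈ d1 ∩ o1 := by rw [hd1o]; exact Or.inl rfl
    exact this.1
  have hxd1 : x ∈ d1 := by
    have : x ∈ d1 ∩ o1 := by rw [hd1o]; exact Or.inr rfl
    exact this.1
  have hxd2 : x ∈ d2 := by
    have : x ∈ d2 ∩ o2 := by rw [hd2o]; exact Or.inl rfl
    exact this.1
  have hyd2 : y ∈ d2 := by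
    have : y ∈ d2 ∩ o2 := by rw [hd2o]; exact Or.inr rfl
    exact this.1
  have hdfin : ∀ d ∈ conF 𝒟 X, d.Finite := by
    rintro d ⟨D', hD', hEq⟩
    have hEq' : D' ∩ X = d := hEq
    refine ((h.2.2.1 o1 h1.1 D' hD').union (h.2.2.1 o2 h2.1 D' hD')).subset ?_
    intro p hp
    rw [← hEq'] at hp
    rcases hp.2 with h' | h'
    · exact Or.inl ⟨h', hp.1⟩
    · exact Or.inr ⟨h', hp.1⟩
  have hfin : (d1 ∪ d2).Finite := (hdfin d1 hd1m.1).union (hdfin d2 hd2m.1)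
  obtain ⟨d, hdm, hed, hyd⟩ := core hX ((d1 ∪ d2).ncard) d1 d2 hd1m hd2m hfin le_rfl
    e y hed1 hyd2 hey ⟨x, hxd1, hxd2⟩
  obtain ⟨q, hqm, hqd⟩ := pair_trace (swap hX) hdm hed hyd hey
  obtain ⟨D, hD𝒟, hDX0⟩ := hdm.1
  have hDX : D ∩ X = d := hDX0
  have hq𝒞 : q ∈ 𝒞 := hqm.1.1
  have hqX : q ⊆ X := hqm.1.2
  have hqD : q ∩ D = {e, y} := by
    rw [← hqd, ← hDX]
    ext p
    simp only [Set.mem_inter_iff]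
    constructor
    · rintro ⟨hp1, hp2⟩; exact ⟨hp1, hp2, hqX hp1⟩
    · rintro ⟨hp1, hp2, _⟩; exact ⟨hp1, hp2⟩
  have heD : e ∈ D := by
    have : e ∈ D ∩ X := hDX ▸ hed
    exact this.1
  obtain ⟨m, hmm, hem, hmD⟩ := exists_minNE h hD𝒟 heD
  have heq : e ∈ q := by
    have : e ∈ q ∩ d := by rw [hqd]; exact Or.inl rfl
    exact this.1
  have hqm' : q ∩ m = {e, y} := by
    refine force_pair hey ?_ ⟨heq, hem⟩ (h.2.2.2.1 q hq𝒞 m hmm.1)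
    intro p hp
    have : p ∈ q ∩ D := ⟨hp.1, hmD hp.2⟩
    rw [hqD] at this; exact this
  have hym : y ∈ m := by
    have : y ∈ q ∩ m := by rw [hqm']; exact Or.inr rfl
    exact this.2
  obtain ⟨ostar, hom, hoeq⟩ := pair_trace (swap h) hmm hem hym hey
  refine ⟨ostar, hom, ?_, ?_⟩
  · have : e ∈ ostar ∩ m := by rw [hoeq]; exact Or.inl rfl
    exact this.1
  · have : y ∈ ostar ∩ m := by rw [hoeq]; exact Or.inr rfl
    exact this.1

end OrthProof

/-- In an orthogonality system, "being in the same connected component"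
is an equivalence relation; moreover, distinct `e, f` lie in a common minimal nonempty
element of `𝒞` if and only if they lie in a common minimal nonempty element of `𝒟`. -/
theorem sameComp_equivalence (E : Set α) (𝒞 𝒟 : Set (Set α)) (h : OrthSys E 𝒞 𝒟) :
    Equivalence (SameComp 𝒞) ∧
      ∀ e f : α, e ≠ f →
        ((∃ o, MinNE 𝒞 o ∧ e ∈ o ∧ f ∈ o) ↔ (∃ d, MinNE 𝒟 d ∧ e ∈ d ∧ f ∈ d)) := by
  constructor
  · refine ⟨fun x => Or.inl rfl, ?_, ?_⟩
    · rintro x y (rfl | ⟨o, ho, hx, hy⟩)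
      · exact Or.inl rfl
      · exact Or.inr ⟨o, ho, hy, hx⟩
    · rintro x y z (rfl | ⟨o1, ho1, hx1, hy1⟩) h2
      · exact h2
      · rcases h2 with rfl | ⟨o2, ho2, hy2, hz2⟩
        · exact Or.inr ⟨o1, ho1, hx1, hy1⟩
        · by_cases hxz : x = z
          · exact Or.inl hxz
          · obtain ⟨o, ho, hxo, hzo⟩ :=
              OrthProof.two_chain h ho1 ho2 hx1 hy1 hy2 hz2 hxz
            exact Or.inr ⟨o, ho, hxo, hzo⟩
  · intro e f hef
    constructor
    · rintro ⟨o, ho, he, hf⟩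
      obtain ⟨d, hd, hdo⟩ := OrthProof.pair_trace h ho he hf hef
      refine ⟨d, hd, ?_, ?_⟩
      · have : e ∈ d ∩ o := by rw [hdo]; exact Or.inl rfl
        exact this.1
      · have : f ∈ d ∩ o := by rw [hdo]; exact Or.inr rfl
        exact this.1
    · rintro ⟨d, hd, he, hf⟩
      obtain ⟨o, ho, hod⟩ := OrthProof.pair_trace (OrthProof.swap h) hd he hf hef
      refine ⟨o, ho, ?_, ?_⟩
      · have : e ∈ o ∩ d := by rw [hod]; exact Or.inl rfl
        exact this.1
      · have : f ∈ o ∩ d := by rw [hod]; exact Or.inr rfl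
        exact this.1
end

section
/- Let k be a field and E a finite set. Then a pair (V, W) of subspaces of k^E is a presentation on E if and only if W is the orthogonal complement of V (with respect to the bilinear form (v, w) ↦ Σ_{e ∈ E} v(e)w(e)). -/
open Function Set

noncomputable section

variable {α k : Type*} [Field k]

/-- Two vectors are orthogonal: supports intersect finitely and the sum of products is zero. -/
def Orthog (v w : α → k) : Prop :=
  (support v ∩ support w).Finite ∧ ∑ᶠ e, v e * w e = 0

/-- The subspace of `k^α` of functions supported in `E` (the formal meaning of `k^E`). -/
def FunOn (E : Set α) : Submodule k (α → k) where
  carrier := {v | support v ⊆ E}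
  add_mem' hf hg := (support_add _ _).trans (union_subset hf hg)
  zero_mem' := by simp
  smul_mem' c f hf := (support_const_smul_subset c f).trans hf

/-- The set `S(V)` of supports of elements of `V`. -/
def suppSet (V : Submodule k (α → k)) : Set (Set α) := support '' (V : Set (α → k))

/-- A presentation on the ground set `E` over `k`: a pair of orthogonal subspaces of `k^E`
whose families of supports satisfy (O2). -/
def IsPresentationOn (E : Set α) (V W : Submodule k (α → k)) : Prop :=
  V ≤ FunOn E ∧ W ≤ FunOn E ∧ (∀ v ∈ V, ∀ w ∈ W, Orthog v w) ∧
    AxO2 E (suppSet V) (suppSet W)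

/-- The pair `(V, W)` presents the matroid `M` on ground set `E`. -/
def Presents (E : Set α) (V W : Submodule k (α → k)) (M : Matroid α) : Prop :=
  M.E = E ∧ (∀ C, MatCircuit M C ↔ MinNE (suppSet V) C) ∧
    (∀ D, MatCircuit M✶ D ↔ MinNE (suppSet W) D)

/-- Restriction of a vector to `X`, as a linear endomap of `k^α` (zeroing outside `X`). -/
def indLM (X : Set α) : (α → k) →ₗ[k] (α → k) where
  toFun v := X.indicator v
  map_add' f g := by
    funext a
    by_cases h : a ∈ X <;> simp [Set.indicator_of_mem, Set.indicator_of_notMem, h]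
  map_smul' c f := by
    funext a
    by_cases h : a ∈ X <;> simp [Set.indicator_of_mem, Set.indicator_of_notMem, h]

/-- Contraction `V.X` of a subspace to `X`. -/
def conV (V : Submodule k (α → k)) (X : Set α) : Submodule k (α → k) :=
  Submodule.map (indLM X) V

/-- Restriction of a pair `(V,W)` to the ground set `X`: `(V↾X, W.X)`. -/
def pairRes (Pr : Submodule k (α → k) × Submodule k (α → k)) (X : Set α) :
    Submodule k (α → k) × Submodule k (α → k) :=
  (Pr.1 ⊓ FunOn X, conV Pr.2 X)

/-- Contraction of a pair `(V,W)` to the ground set `X`: `(V.X, W↾X)`. -/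
def pairCon (Pr : Submodule k (α → k) × Submodule k (α → k)) (X : Set α) :
    Submodule k (α → k) × Submodule k (α → k) :=
  (conV Pr.1 X, Pr.2 ⊓ FunOn X)

/-- A set `I` is `Π`-independent (w.r.t. the vector subspace `V`): it includes no
nonempty support of a vector. -/
def PresIndep (V : Submodule k (α → k)) (I : Set α) : Prop :=
  ∀ v ∈ V, support v ⊆ I → v = 0

end

/-! The form `(v, w) ↦ ∑ e ∈ E, v e * w e` is nondegenerate on `k^E`, so a vector outside a
subspace `U` of `k^E` is separated from `U` by a vector of `U^⊥`; in particular `U^⊥⊥ = U`.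

If `W = V^⊥`, (O2) at `E = P ∪ Q ∪ {e}` is decided by whether the unit vector `δ_e` lies in
`V + k^P`: if `δ_e = v + p`, then `v` is the required vector of `V`; if not, a vector of
`(V + k^P)^⊥` separating `δ_e` vanishes on `P` but not at `e`.

Conversely, if `(V, W)` is a presentation then `W^⊥ ⊆ V`: for `x ∈ W^⊥` with support
`X ∋ e`, (O2) at `(X - e, E - X, e)` cannot produce `w ∈ W`, which would meet `x` only at `e`;
so it produces `v ∈ V` with `e ∈ supp v ⊆ X`, and subtracting a multiple of `v` from `x`
shrinks the support. Hence `V^⊥ = W^⊥⊥ = W`. -/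

section

variable {α k : Type*} [Field k]

lemma funOn_mono {X Y : Set α} (h : X ⊆ Y) : FunOn (k := k) X ≤ FunOn Y :=
  fun _ hv => (hv : _ ⊆ X).trans h

lemma single_mem_funOn [DecidableEq α] {X : Set α} {i : α} (hi : i ∈ X) :
    (Pi.single i 1 : α → k) ∈ FunOn X :=
  Pi.support_single_subset.trans (singleton_subset_iff.mpr hi)

def dotOn (s : Finset α) : LinearMap.BilinForm k (α → k) :=
  LinearMap.mk₂ k (fun v w => ∑ i ∈ s, v i * w i)
    (fun _ _ _ => by simp only [Pi.add_apply, add_mul, Finset.sum_add_distrib])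
    (fun _ _ _ => by simp only [Pi.smul_apply, smul_eq_mul, mul_assoc, Finset.mul_sum])
    (fun _ _ _ => by simp only [Pi.add_apply, mul_add, Finset.sum_add_distrib])
    (fun _ _ _ => by simp only [Pi.smul_apply, smul_eq_mul, mul_left_comm, Finset.mul_sum])

variable {s : Finset α}

namespace dotOn

@[simp]
lemma apply (v w : α → k) : dotOn s v w = ∑ i ∈ s, v i * w i := rfl

lemma comm (v w : α → k) : dotOn s v w = dotOn s w v := by
  simp only [apply, mul_comm]

lemma single_left [DecidableEq α] {i : α} (hi : i ∈ s) (w : α → k) :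
    dotOn s (Pi.single i 1) w = w i := by
  simp [Pi.single_apply, hi]

lemma finsum_mul_eq {v : α → k} (hv : support v ⊆ s) (w : α → k) :
    ∑ᶠ i, v i * w i = dotOn s v w :=
  finsum_eq_sum_of_support_subset _ ((support_mul_subset_left v w).trans hv)

lemma dual_apply_eq [DecidableEq α] (f : Module.Dual k (α → k)) {y : α → k}
    (hy : y ∈ FunOn (s : Set α)) :
    f y = dotOn s y ((s : Set α).indicator fun i => f (Pi.single i 1)) := by
  have hy_sum : ∑ i ∈ s, y i • (Pi.single i 1 : α → k) = y := by
    ext j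
    by_cases hj : j ∈ s
    · simp [Finset.sum_apply, Pi.single_apply, hj]
    · simp [Finset.sum_apply, Pi.single_apply, hj, notMem_support.mp (fun h => hj (hy h))]
  conv_lhs => rw [← hy_sum]
  simp +contextual [map_sum, map_smul]

end dotOn

def orthOn (s : Finset α) (U : Submodule k (α → k)) : Submodule k (α → k) :=
  FunOn s ⊓ (dotOn s).orthogonal U

lemma mem_orthOn {U : Submodule k (α → k)} {w : α → k} :
    w ∈ orthOn s U ↔ support w ⊆ s ∧ ∀ u ∈ U, dotOn s u w = 0 :=
  Iff.rfl

lemma orthOn_anti {U U' : Submodule k (α → k)} (h : U ≤ U') : orthOn s U' ≤ orthOn s U :=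
  inf_le_inf_left _ ((dotOn s).orthogonal_le h)

lemma exists_mem_orthOn_dotOn_ne_zero {U : Submodule k (α → k)} (hU : U ≤ FunOn (s : Set α))
    {x : α → k} (hx : x ∈ FunOn (s : Set α)) (hxU : x ∉ U) :
    ∃ w ∈ orthOn s U, dotOn s x w ≠ 0 := by
  classical
  obtain ⟨f, hfx, hfU⟩ := Submodule.exists_dual_map_eq_bot_of_notMem hxU inferInstance
  refine ⟨(s : Set α).indicator fun i => f (Pi.single i 1), ⟨?_, fun u hu => ?_⟩, ?_⟩
  · exact support_indicator_subset
  · rw [← dotOn.dual_apply_eq f (hU hu)]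
    exact (Submodule.eq_bot_iff _).mp hfU _ (Submodule.mem_map_of_mem hu)
  · rwa [← dotOn.dual_apply_eq f hx]

lemma orthOn_orthOn {U : Submodule k (α → k)} (hU : U ≤ FunOn (s : Set α)) :
    orthOn s (orthOn s U) = U := by
  refine le_antisymm (fun u hu => by_contra fun huU => ?_) (le_inf hU fun u hu y hy => ?_)
  · obtain ⟨huE, huU'⟩ := mem_orthOn.mp hu
    obtain ⟨y, hy, hyu⟩ := exists_mem_orthOn_dotOn_ne_zero hU huE huU
    exact hyu (dotOn.comm u y ▸ huU' y hy)
  · rw [dotOn.comm]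
    exact (mem_orthOn.mp hy).2 u hu

lemma support_sub_smul_ssubset {x v : α → k} {e : α} (hxe : x e ≠ 0) (hve : v e ≠ 0)
    (hvx : support v ⊆ support x) : support (x - (x e / v e) • v) ⊂ support x := by
  refine ssubset_of_subset_not_subset (fun i hi => ?_) fun h => h hxe ?_
  · by_contra hxi
    exact hi (by simp [notMem_support.mp hxi, notMem_support.mp (mt (@hvx i) hxi)])
  · simp [hve]

lemma orthOn_le_of_axO2 {V W : Submodule k (α → k)} (hVW : V ≤ (dotOn s).orthogonal W)
    (hO2 : AxO2 (s : Set α) (suppSet V) (suppSet W)) : orthOn s W ≤ V := by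
  intro x hx
  induction hn : (support x).ncard using Nat.strong_induction_on generalizing x with
  | _ n ih =>
  obtain ⟨hxs, hxW⟩ := mem_orthOn.mp hx
  obtain rfl | hx0 := eq_or_ne x 0
  · exact V.zero_mem
  obtain ⟨e, he⟩ := support_nonempty_iff.mpr hx0
  have hsplit : support x \ {e} ∪ ((s : Set α) \ support x) ∪ {e} = s := by
    rw [union_right_comm, sdiff_union_self, union_singleton, insert_eq_of_mem he,
      union_sdiff_cancel hxs]
  rcases hO2 (support x \ {e}) (↑s \ support x) e (disjoint_sdiff_right.mono_left sdiff_subset)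
    (by simp) (by simp [he]) hsplit with
    ⟨_, ⟨v, hv, rfl⟩, hve, hvx⟩ | ⟨_, ⟨w, hw, rfl⟩, hwe, hwx⟩
  · have hvx : support v ⊆ support x := by simpa [insert_eq_of_mem he] using hvx
    have hlt := support_sub_smul_ssubset he hve hvx
    have hv' : v ∈ orthOn s W := mem_orthOn.mpr ⟨hvx.trans hxs, hVW hv⟩
    have hx' : x - (x e / v e) • v ∈ V :=
      ih _ (hn ▸ ncard_lt_ncard hlt ((s.finite_toSet).subset hxs))
        (Submodule.sub_mem _ hx (Submodule.smul_mem _ _ hv')) rfl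
    simpa using V.add_mem hx' (V.smul_mem (x e / v e) hv)
  · have hwx_e : dotOn s w x = w e * x e := by
      refine Finset.sum_eq_single_of_mem e (hxs he) fun i _ hie => ?_
      by_cases hwi : w i = 0
      · rw [hwi, zero_mul]
      · obtain ⟨-, hxi⟩ | rfl := hwx hwi
        · rw [notMem_support.mp hxi, mul_zero]
        · exact absurd rfl hie
    exact absurd (hxW w hw) (hwx_e ▸ mul_ne_zero hwe he)

lemma axO2_orthOn {V : Submodule k (α → k)} (hV : V ≤ FunOn (s : Set α)) :
    AxO2 (s : Set α) (suppSet V) (suppSet (orthOn s V)) := by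
  classical
  rintro P Q e - heP - hs
  have hes : e ∈ (s : Set α) := hs ▸ Or.inr rfl
  by_cases hδ : Pi.single e 1 ∈ V ⊔ FunOn P
  · obtain ⟨v, hv, p, hp, hvp⟩ := Submodule.mem_sup.mp hδ
    have hv_eq : v = Pi.single e 1 - p := eq_sub_of_add_eq hvp
    refine .inl ⟨_, ⟨v, hv, rfl⟩, ?_, ?_⟩
    · simp [hv_eq, notMem_support.mp (mt (@hp e) heP)]
    · rw [hv_eq, union_comm]
      exact (support_sub _ _).trans (union_subset_union Pi.support_single_subset hp)
  · have hPs : P ⊆ s := hs ▸ subset_union_left.trans subset_union_left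
    obtain ⟨w, hw, hδw⟩ := exists_mem_orthOn_dotOn_ne_zero
      (sup_le hV (funOn_mono hPs)) (single_mem_funOn hes) hδ
    rw [dotOn.single_left hes] at hδw
    refine .inr ⟨_, ⟨w, orthOn_anti le_sup_left hw, rfl⟩, hδw, fun i hi => ?_⟩
    obtain ⟨hws, hwU⟩ := mem_orthOn.mp hw
    have hiP : i ∉ P := fun hiP => hi <| by
      rw [← dotOn.single_left (hPs hiP) w]
      exact hwU _ (Submodule.mem_sup_right (single_mem_funOn hiP))
    have his : i ∈ (s : Set α) := hws hi
    rw [← hs] at his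
    rcases his with (h | h) | h
    exacts [absurd h hiP, .inl h, .inr h]

lemma setOf_finsum_eq_orthOn {V : Submodule k (α → k)} (hV : V ≤ FunOn (s : Set α)) :
    {w | support w ⊆ s ∧ ∀ v ∈ V, ∑ᶠ e, v e * w e = 0} =
      (orthOn s V : Set (α → k)) := by
  ext w
  exact and_congr_right' <| forall₂_congr fun v hv => by rw [dotOn.finsum_mul_eq (hV hv)]

end

theorem finite_presentation_iff_orthogonal_complement_general {α k : Type*} [Field k]
    (E : Set α) (hE : E.Finite) (V W : Submodule k (α → k))
    (hV : V ≤ FunOn E) :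
    IsPresentationOn E V W ↔
      (W : Set (α → k)) = {w | Function.support w ⊆ E ∧ ∀ v ∈ V, ∑ᶠ e, v e * w e = 0} := by
  obtain ⟨s, rfl⟩ := hE.exists_finset_coe
  rw [setOf_finsum_eq_orthOn hV, SetLike.coe_set_eq]
  constructor
  · rintro ⟨-, hW, horth, hO2⟩
    have hWV : W ≤ (dotOn s).orthogonal V := fun w hw v hv => by
      rw [← dotOn.finsum_mul_eq (hV hv)]
      exact (horth v hv w hw).2
    have hVW : V ≤ (dotOn s).orthogonal W := fun v hv w hw => by
      rw [dotOn.comm]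
      exact hWV hw v hv
    have hV_eq : orthOn s W = V := le_antisymm (orthOn_le_of_axO2 hVW hO2) (le_inf hV hVW)
    rw [← hV_eq, orthOn_orthOn hW]
  · rintro rfl
    refine ⟨hV, inf_le_left, fun v hv w hw => ⟨?_, ?_⟩, axO2_orthOn hV⟩
    · exact s.finite_toSet.subset (inter_subset_left.trans (hV hv))
    · rw [dotOn.finsum_mul_eq (hV hv)]
      exact (mem_orthOn.mp hw).2 v hv

/-- For a finite ground set `E`, a pair `(V, W)` of subspaces of `k^E`
is a presentation on `E` if and only if `W` is the orthogonal complement of `V` in `k^E`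
with respect to the bilinear form `(v, w) ↦ ∑ e, v e * w e`. -/
theorem finite_presentation_iff_orthogonal_complement {α k : Type*} [Field k]
    (E : Set α) (hE : E.Finite) (V W : Submodule k (α → k))
    (hV : V ≤ FunOn E) (hW : W ≤ FunOn E) :
    IsPresentationOn E V W ↔
      (W : Set (α → k)) = {w | Function.support w ⊆ E ∧ ∀ v ∈ V, ∑ᶠ e, v e * w e = 0} :=
  finite_presentation_iff_orthogonal_complement_general E hE V W hV
end

section
/- Let k be a field, Π = (V, W) a presentation on a set E over k, v₀ ∈ V, X a subset of E, and F a finite subset of E disjoint from X. Let L = {v ∈ V : v↾F = v₀↾F and supp(v) ⊆ supp(v₀) ∪ X}. Then L contains an element v such that supp(v)∖X is minimal, i.e., there is no v' ∈ L with supp(v')∖X a proper subset of supp(v)∖X. -/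
open Function Set

/-!
Zorn's lemma gives a maximal set `M`, disjoint from `X ∪ F`, that is avoided by the support of
some `v ∈ L`; such a `v` has minimal support outside `X`, because a `v'` with smaller support
would avoid `M` together with one more point. The upper bound of a chain `𝒞` is found by
induction on `F`: at `e ∈ F`, (O2) either gives a vector of `V` that clears the coordinate `e`
without meeting `⋃₀ 𝒞`, or a covector `w`; as `supp w ∩ supp v₀` is finite, `w` would meet the
witness of a single member of `𝒞` only in `e`, contradicting orthogonality.
-/

open Function Set

section Development

variable {α k : Type*} [Field k]

theorem IsChain.exists_mem_subset_of_finite {β : Type*} {𝒞 : Set (Set β)}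
    (hchain : IsChain (· ⊆ ·) 𝒞) (hne : 𝒞.Nonempty) {B : Set β} (hB : B.Finite)
    (hB𝒞 : B ⊆ ⋃₀ 𝒞) : ∃ Q ∈ 𝒞, B ⊆ Q :=
  hchain.directedOn.exists_mem_subset_of_finite_of_subset_sUnion hne hB hB𝒞

theorem Orthog.mul_eq_zero_of_support_inter_subset {v w : α → k} (h : Orthog v w) {e : α}
    (he : support v ∩ support w ⊆ {e}) : v e * w e = 0 := by
  rw [← h.2, finsum_eq_single _ e]
  intro x hx
  by_contra hvw
  exact hx (he ⟨left_ne_zero_of_mul hvw, right_ne_zero_of_mul hvw⟩)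

/-- (O2) for the partition of `E` into `P`, its complement and `e`. -/
theorem AxO2.exists_subset_insert_or_disjoint {E : Set α} {𝒞 𝒟 : Set (Set α)}
    (hO2 : AxO2 E 𝒞 𝒟) {P : Set α} {e : α} (hPE : P ⊆ E) (he : e ∈ E) (heP : e ∉ P) :
    (∃ C ∈ 𝒞, e ∈ C ∧ C ⊆ insert e P) ∨ (∃ D ∈ 𝒟, e ∈ D ∧ Disjoint D P) := by
  have hpart : P ∪ (E \ insert e P) ∪ {e} = E := by
    ext x
    by_cases hxP : x ∈ P
    · simp [hxP, hPE hxP]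
    · by_cases hxe : x = e <;> simp_all
  have hdisj : Disjoint P (E \ insert e P) :=
    disjoint_left.2 fun x hxP hxQ => hxQ.2 (mem_insert_of_mem e hxP)
  refine (hO2 P (E \ insert e P) e hdisj heP (fun h => h.2 (mem_insert e P)) hpart).imp
    (fun ⟨C, hC, heC, hCP⟩ => ⟨C, hC, heC, ?_⟩) fun ⟨D, hD, heD, hDQ⟩ => ⟨D, hD, heD, ?_⟩
  · rwa [union_singleton] at hCP
  · refine disjoint_left.2 fun x hxD hxP => ?_
    rcases hDQ hxD with hxQ | rfl
    · exact hxQ.2 (mem_insert_of_mem e hxP)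
    · exact heP hxP

def constrainedSet (V : Submodule k (α → k)) (F : Set α) (g : α → k) (Y : Set α) :
    Set (α → k) :=
  {v | v ∈ V ∧ (∀ a ∈ F, v a = g a) ∧ support v ⊆ Y}

theorem support_add_smul_subset (v u : α → k) (c : k) :
    support (v + c • u) ⊆ support v ∪ support u :=
  (support_add _ _).trans (union_subset_union_right _ (support_const_smul_subset c u))

theorem add_smul_mem_constrainedSet {V : Submodule k (α → k)} {F Y : Set α} {g v u : α → k}
    (hv : v ∈ constrainedSet V F g Y) (hu : u ∈ V) (huY : support u ⊆ Y) (c : k) :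
    v + c • u ∈ constrainedSet V F (g + c • u) Y :=
  ⟨add_mem hv.1 (V.smul_mem c hu), fun a ha => by simp [hv.2.1 a ha],
    (support_add_smul_subset v u c).trans (union_subset hv.2.2 huY)⟩

theorem zero_mem_constrainedSet {V : Submodule k (α → k)} {F Y : Set α} {g : α → k}
    (hg : ∀ a ∈ F, g a = 0) : 0 ∈ constrainedSet V F g Y :=
  ⟨V.zero_mem, fun a ha => (hg a ha).symm, by simp⟩

section Chain

variable {E Y F : Set α} {V W : Submodule k (α → k)} {𝒞 : Set (Set α)}

/-- (O2) at `e` for `P = (E ∩ Y) \ (⋃₀ 𝒞 ∪ (F \ s))`: the covector alternative is impossible,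
since that covector would meet the witness of a large enough member of the chain only in `e`. -/
theorem exists_vector_clearing_coord (hVE : V ≤ FunOn E) (horth : ∀ v ∈ V, ∀ w ∈ W, Orthog v w)
    (hO2 : AxO2 E (suppSet V) (suppSet W)) (hchain : IsChain (· ⊆ ·) 𝒞) (hne : 𝒞.Nonempty)
    (hF𝒞 : ∀ Q ∈ 𝒞, Disjoint F Q) (hfin : ∀ w ∈ W, (support w ∩ Y ∩ ⋃₀ 𝒞).Finite)
    {s : Set α} {e : α} (heF : e ∈ F) (hes : e ∉ s) {g : α → k}
    (hg : ∀ a ∈ F \ insert e s, g a = 0) (hge : g e ≠ 0)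
    (hQ : ∀ Q ∈ 𝒞, ∃ v ∈ constrainedSet V F g Y, Disjoint (support v) Q) :
    ∃ u ∈ V, u e ≠ 0 ∧ support u ⊆ Y ∧ Disjoint (support u) (⋃₀ 𝒞) ∧
      ∀ a ∈ F \ insert e s, u a = 0 := by
  have he𝒞 : e ∉ ⋃₀ 𝒞 := fun ⟨Q, hQ𝒞, heQ⟩ => disjoint_left.1 (hF𝒞 Q hQ𝒞) heF heQ
  obtain ⟨Q₀, hQ₀⟩ := hne
  obtain ⟨v₀, hv₀, -⟩ := hQ Q₀ hQ₀
  have hev₀ : e ∈ support v₀ := by rw [mem_support, hv₀.2.1 e heF]; exact hge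
  have heY : e ∈ Y := hv₀.2.2 hev₀
  set P : Set α := (E ∩ Y) \ (⋃₀ 𝒞 ∪ (F \ s))
  have heP : e ∉ P := fun h => h.2 (Or.inr ⟨heF, hes⟩)
  rcases hO2.exists_subset_insert_or_disjoint (sdiff_subset.trans inter_subset_left)
    (hVE hv₀.1 hev₀) heP with ⟨_, ⟨u, hu, rfl⟩, heu, huP⟩ | ⟨_, ⟨w, hw, rfl⟩, hew, hwP⟩
  · refine ⟨u, hu, heu, huP.trans (insert_subset heY (sdiff_subset.trans inter_subset_right)),
      disjoint_left.2 fun x hxu hx𝒞 => ?_, fun a ha => ?_⟩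
    · rcases huP hxu with rfl | hxP
      · exact he𝒞 hx𝒞
      · exact hxP.2 (Or.inl hx𝒞)
    · by_contra hua
      rcases huP hua with rfl | haP
      · exact ha.2 (mem_insert a s)
      · exact haP.2 (Or.inr ⟨ha.1, fun has => ha.2 (mem_insert_of_mem e has)⟩)
  · obtain ⟨Q, hQ𝒞, hwQ⟩ :=
      hchain.exists_mem_subset_of_finite ⟨Q₀, hQ₀⟩ (hfin w hw) inter_subset_right
    obtain ⟨v, hv, hvQ⟩ := hQ Q hQ𝒞
    have hvw : support v ∩ support w ⊆ {e} := by
      rintro x ⟨hxv, hxw⟩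
      by_contra hxe
      have hxP : x ∈ ⋃₀ 𝒞 ∪ (F \ s) := by
        by_contra h
        exact disjoint_left.1 hwP hxw ⟨⟨hVE hv.1 hxv, hv.2.2 hxv⟩, h⟩
      rcases hxP with hx𝒞 | ⟨hxF, hxs⟩
      · exact disjoint_left.1 hvQ hxv (hwQ ⟨⟨hxw, hv.2.2 hxv⟩, hx𝒞⟩)
      · refine hxv ((hv.2.1 x hxF).trans (hg x ⟨hxF, ?_⟩))
        rintro (rfl | hxs')
        exacts [hxe rfl, hxs hxs']
    have hvwe := (horth v hv.1 w hw).mul_eq_zero_of_support_inter_subset hvw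
    rw [hv.2.1 e heF] at hvwe
    exact absurd hvwe (mul_ne_zero hge hew)

theorem exists_mem_constrainedSet_disjoint_sUnion (hVE : V ≤ FunOn E)
    (horth : ∀ v ∈ V, ∀ w ∈ W, Orthog v w) (hO2 : AxO2 E (suppSet V) (suppSet W))
    (hchain : IsChain (· ⊆ ·) 𝒞) (hne : 𝒞.Nonempty) (hF : F.Finite)
    (hF𝒞 : ∀ Q ∈ 𝒞, Disjoint F Q) (hfin : ∀ w ∈ W, (support w ∩ Y ∩ ⋃₀ 𝒞).Finite)
    {g : α → k} (hQ : ∀ Q ∈ 𝒞, ∃ v ∈ constrainedSet V F g Y, Disjoint (support v) Q) :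
    ∃ v ∈ constrainedSet V F g Y, Disjoint (support v) (⋃₀ 𝒞) := by
  refine hF.induction_on_subset (motive := fun S _ => ∀ g : α → k, (∀ a ∈ F \ S, g a = 0) →
      (∀ Q ∈ 𝒞, ∃ v ∈ constrainedSet V F g Y, Disjoint (support v) Q) →
      ∃ v ∈ constrainedSet V F g Y, Disjoint (support v) (⋃₀ 𝒞)) F ?_ ?_ g (by simp) hQ
  · intro g hg _
    exact ⟨0, zero_mem_constrainedSet (by simpa using hg), by simp⟩
  intro e s heF _ hes ih g hg hQ
  by_cases hge : g e = 0
  · refine ih g (fun a ha => ?_) hQ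
    by_cases hae : a = e
    · rwa [hae]
    · exact hg a ⟨ha.1, by simp [hae, ha.2]⟩
  obtain ⟨u, hu, hue, huY, hu𝒞, huF⟩ :=
    exists_vector_clearing_coord hVE horth hO2 hchain hne hF𝒞 hfin heF hes hg hge hQ
  set c := g e / u e
  have hg' : ∀ a ∈ F \ s, (g + (-c) • u) a = 0 := by
    rintro a ⟨haF, has⟩
    by_cases hae : a = e
    · subst hae
      simp [c, hue]
    · simp [hg a ⟨haF, by simp [hae, has]⟩, huF a ⟨haF, by simp [hae, has]⟩]
  obtain ⟨v, hv, hv𝒞⟩ := ih (g + (-c) • u) hg' fun Q hQ𝒞 => by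
    obtain ⟨v, hv, hvQ⟩ := hQ Q hQ𝒞
    exact ⟨v + (-c) • u, add_smul_mem_constrainedSet hv hu huY _,
      (disjoint_union_left.2 ⟨hvQ, hu𝒞.mono_right (subset_sUnion_of_mem hQ𝒞)⟩).mono_left
        (support_add_smul_subset _ _ _)⟩
  refine ⟨v + c • u, ?_, (disjoint_union_left.2 ⟨hv𝒞, hu𝒞⟩).mono_left
    (support_add_smul_subset _ _ _)⟩
  simpa [add_assoc, ← add_smul] using add_smul_mem_constrainedSet hv hu huY c

end Chain

theorem not_exists_support_diff_ssubset_of_maximal {V : Submodule k (α → k)} {F X Y M : Set α}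
    {g v : α → k}
    (hM : Maximal (fun Q => Disjoint (X ∪ F) Q ∧
      ∃ u ∈ constrainedSet V F g Y, Disjoint (support u) Q) M)
    (hv : v ∈ constrainedSet V F g Y) (hvM : Disjoint (support v) M) :
    ¬ ∃ v' ∈ constrainedSet V F g Y, support v' \ X ⊂ support v \ X := by
  rintro ⟨v', hv', hss⟩
  obtain ⟨a, ⟨hav, haX⟩, hav'⟩ := exists_of_ssubset hss
  have hav' : v' a = 0 := notMem_support.1 fun h => hav' ⟨h, haX⟩
  have haF : a ∉ F := fun haF => hav (by rw [hv.2.1 a haF, ← hv'.2.1 a haF, hav'])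
  have haM : insert a M ⊆ M := by
    refine hM.2 ⟨disjoint_insert_right.2 ⟨fun h => h.elim haX haF, hM.1.1⟩, v', hv', ?_⟩
      (subset_insert a M)
    refine disjoint_insert_right.2 ⟨fun h => h hav', disjoint_left.2 fun x hxv' hxM => ?_⟩
    have hxX : x ∉ X := fun hxX => disjoint_left.1 hM.1.1 (Or.inl hxX) hxM
    exact disjoint_left.1 hvM (hss.subset ⟨hxv', hxX⟩).1 hxM
  exact disjoint_left.1 hvM hav (haM (mem_insert a M))

end Development

theorem exists_minimal_support_vector_general {α k : Type*} [Field k]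
    (E : Set α) (V W : Submodule k (α → k)) (h : IsPresentationOn E V W)
    (v₀ : α → k) (hv₀ : v₀ ∈ V) (X : Set α)
    (F : Set α) (hFfin : F.Finite) :
    ∃ v ∈ {v : α → k | v ∈ V ∧ (∀ e ∈ F, v e = v₀ e) ∧
        Function.support v ⊆ Function.support v₀ ∪ X},
      ¬ ∃ v' ∈ {v : α → k | v ∈ V ∧ (∀ e ∈ F, v e = v₀ e) ∧
        Function.support v ⊆ Function.support v₀ ∪ X},
        Function.support v' \ X ⊂ Function.support v \ X := by
  obtain ⟨hVE, -, horth, hO2⟩ := h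
  let L := constrainedSet V F v₀ (support v₀ ∪ X)
  let 𝒮 : Set (Set α) := {Q | Disjoint (X ∪ F) Q ∧ ∃ v ∈ L, Disjoint (support v) Q}
  have hchain : ∀ 𝒞 ⊆ 𝒮, IsChain (· ⊆ ·) 𝒞 → 𝒞.Nonempty → ∃ M ∈ 𝒮, ∀ Q ∈ 𝒞, Q ⊆ M := by
    intro 𝒞 h𝒞 hchain hne
    have hX𝒞 : Disjoint (X ∪ F) (⋃₀ 𝒞) := disjoint_sUnion_right.2 fun Q hQ => (h𝒞 hQ).1
    have hfin : ∀ w ∈ W, (support w ∩ (support v₀ ∪ X) ∩ ⋃₀ 𝒞).Finite := by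
      refine fun w hw => (horth v₀ hv₀ w hw).1.subset ?_
      rintro x ⟨⟨hxw, hxv₀ | hxX⟩, hx𝒞⟩
      exacts [⟨hxv₀, hxw⟩, (disjoint_left.1 hX𝒞 (Or.inl hxX) hx𝒞).elim]
    exact ⟨⋃₀ 𝒞, ⟨hX𝒞, exists_mem_constrainedSet_disjoint_sUnion hVE horth hO2 hchain hne hFfin
      (fun Q hQ => (h𝒞 hQ).1.mono_left subset_union_right) hfin fun Q hQ => (h𝒞 hQ).2⟩,
      fun Q => subset_sUnion_of_mem⟩
  obtain ⟨M, -, hM⟩ := zorn_subset_nonempty 𝒮 hchain ∅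
    ⟨disjoint_empty _, v₀, ⟨hv₀, fun _ _ => rfl, subset_union_left⟩, disjoint_empty _⟩
  obtain ⟨v, hv, hvM⟩ := hM.1.2
  exact ⟨v, hv, not_exists_support_diff_ssubset_of_maximal hM hv hvM⟩

/-- Among the vectors `v ∈ V` with `v↾F = v₀↾F` and
`supp v ⊆ supp v₀ ∪ X`, there is one whose support outside `X` is minimal. -/
theorem exists_minimal_support_vector {α k : Type*} [Field k]
    (E : Set α) (V W : Submodule k (α → k)) (h : IsPresentationOn E V W)
    (v₀ : α → k) (hv₀ : v₀ ∈ V) (X : Set α) (hX : X ⊆ E)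
    (F : Set α) (hF : F ⊆ E) (hFfin : F.Finite) (hFX : Disjoint F X) :
    ∃ v ∈ {v : α → k | v ∈ V ∧ (∀ e ∈ F, v e = v₀ e) ∧
        Function.support v ⊆ Function.support v₀ ∪ X},
      ¬ ∃ v' ∈ {v : α → k | v ∈ V ∧ (∀ e ∈ F, v e = v₀ e) ∧
        Function.support v ⊆ Function.support v₀ ∪ X},
        Function.support v' \ X ⊂ Function.support v \ X :=
  exists_minimal_support_vector_general E V W h v₀ hv₀ X F hFfin
end

section
/- Let k be a field, Π a presentation on a set E over k, F a finite subset of E, and P a subset of E disjoint from F. Then there is a Π-independent subset P' of P such that (Π / P)↾F = (Π / P')↾F. -/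
open Function Set

/-!
Write `(Π / X)↾F = (A(X), B(X))`, where `A(X) ⊆ k^F` consists of the restrictions to `F` of the
vectors of `V` supported in `F ∪ X`, and `B(X)` of the restrictions of the vectors of `W` that
vanish on `X`. As `F` is finite, (O2) provides two triangular families of pivots which show
that `A(X)` and `B(X)` are orthogonal complements of each other in `k^F`. So it suffices to find
an independent `P' ⊆ P` with `A(P') = A(P)`.

Take `P'` minimal among the sets `S ⊆ P` that meet every support of `W` finitely and satisfy
`A(P) ⊆ A(S)`; such an `S` exists because `A(P)` is finitely generated. Zorn's lemma applies:
a support of `W` missing the intersection of a chain already misses one of its members, by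
finiteness, so `A(P)` is orthogonal to `B` of the intersection. A nonzero vector of `V`
supported in `P'` would let us eliminate one coordinate of `P'`, contradicting minimality.
-/

section

variable {α k : Type*} [Field k]

/-- `A(X)` and `B(X)`: the two components of `(Π / X)↾F` for `Π = (V, W)`, when `F ⊆ E` is
disjoint from `X` (`pairRes_pairCon_eq`). -/
noncomputable def shadowV (V : Submodule k (α → k)) (F X : Set α) : Submodule k (α → k) :=
  conV (V ⊓ FunOn (F ∪ X)) F

noncomputable def shadowW (W : Submodule k (α → k)) (E F X : Set α) : Submodule k (α → k) :=
  conV (W ⊓ FunOn (E \ X)) F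

def MeetsFinitely (W : Submodule k (α → k)) (S : Set α) : Prop :=
  ∀ w ∈ W, (support w ∩ S).Finite

section Shadows

variable {V W : Submodule k (α → k)} {E F X Y : Set α}

theorem mem_funOn {v : α → k} : v ∈ FunOn (k := k) X ↔ support v ⊆ X := Iff.rfl

theorem mem_shadowV {x : α → k} :
    x ∈ shadowV V F X ↔ ∃ v ∈ V, support v ⊆ F ∪ X ∧ F.indicator v = x := by
  simp only [shadowV, conV, Submodule.mem_map, Submodule.mem_inf, mem_funOn, and_assoc]
  rfl

theorem mem_shadowW {x : α → k} :
    x ∈ shadowW W E F X ↔ ∃ w ∈ W, support w ⊆ E \ X ∧ F.indicator w = x := by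
  simp only [shadowW, conV, Submodule.mem_map, Submodule.mem_inf, mem_funOn, and_assoc]
  rfl

theorem shadowV_le_funOn : shadowV V F X ≤ FunOn F := by
  rintro _ ⟨v, -, rfl⟩
  exact support_indicator_subset

theorem shadowW_le_funOn : shadowW W E F X ≤ FunOn F := by
  rintro _ ⟨w, -, rfl⟩
  exact support_indicator_subset

theorem shadowV_mono (hXY : X ⊆ Y) : shadowV V F X ≤ shadowV V F Y :=
  Submodule.map_mono (inf_le_inf_left V fun _ hv => hv.trans (union_subset_union_right F hXY))

theorem shadowW_anti (hXY : X ⊆ Y) : shadowW W E F Y ≤ shadowW W E F X :=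
  Submodule.map_mono (inf_le_inf_left W fun _ hw => hw.trans (sdiff_subset_sdiff_right hXY))

theorem indicator_diff_eq_indicator (hF : F ⊆ E) (hFX : Disjoint F X) {v : α → k}
    (hv : support v ⊆ F ∪ X) : (E \ X).indicator v = F.indicator v := by
  have hEF : (E \ X) ∩ (F ∪ X) = F := by
    rw [inter_union_distrib_left, sdiff_inter_self, union_empty]
    exact inter_eq_right.2 (subset_sdiff.2 ⟨hF, hFX⟩)
  rw [← indicator_eq_self.2 hv, indicator_indicator, hEF, indicator_indicator,
    inter_eq_left.2 subset_union_left]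

theorem pairRes_pairCon_eq (hV : V ≤ FunOn E) (hF : F ⊆ E) (hFX : Disjoint F X) :
    pairRes (pairCon (V, W) (E \ X)) F = (shadowV V F X, shadowW W E F X) := by
  refine Prod.ext (le_antisymm ?_ ?_) rfl
  · rintro _ ⟨⟨v, hv, rfl⟩, hvF⟩
    have hvFX : support v ⊆ F ∪ X := fun t ht => by
      by_cases htX : t ∈ X
      · exact Or.inr htX
      · exact Or.inl (hvF (indicator_apply_ne_zero.2 ⟨⟨hV hv ht, htX⟩, ht⟩))
    exact mem_shadowV.2 ⟨v, hv, hvFX, (indicator_diff_eq_indicator hF hFX hvFX).symm⟩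
  · intro x hx
    obtain ⟨v, hv, hvFX, rfl⟩ := mem_shadowV.1 hx
    exact ⟨⟨v, hv, indicator_diff_eq_indicator hF hFX hvFX⟩, shadowV_le_funOn hx⟩

theorem sum_mul_eq_zero_of_mem_shadow (hVW : ∀ v ∈ V, ∀ w ∈ W, Orthog v w) {F : Finset α}
    {a b : α → k} (ha : a ∈ shadowV V F X) (hb : b ∈ shadowW W E F X) :
    ∑ t ∈ F, a t * b t = 0 := by
  obtain ⟨v, hv, hvs, rfl⟩ := mem_shadowV.1 ha
  obtain ⟨w, hw, hws, rfl⟩ := mem_shadowW.1 hb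
  have hvw : support (fun t => v t * w t) ⊆ F := by
    rw [support_mul]
    rintro t ⟨htv, htw⟩
    exact (hvs htv).resolve_right (hws htw).2
  rw [← (hVW v hv w hw).2, finsum_eq_sum_of_support_subset _ hvw]
  exact Finset.sum_congr rfl fun t ht => by
    rw [indicator_of_mem (Finset.mem_coe.2 ht), indicator_of_mem (Finset.mem_coe.2 ht)]

end Shadows

section Dichotomy

variable {V W : Submodule k (α → k)} {E F X : Set α}

theorem IsPresentationOn.shadow_dichotomy (h : IsPresentationOn E V W) (hF : F ⊆ E)
    (hX : X ⊆ E) (hFX : Disjoint F X) {e : α} (he : e ∈ F) {T : Set α} (hT : T ⊆ F)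
    (heT : e ∉ T) :
    (∃ a ∈ shadowV V F X, a e ≠ 0 ∧ support a ⊆ insert e T) ∨
      ∃ b ∈ shadowW W E F X, b e ≠ 0 ∧ ∀ t ∈ T, b t = 0 := by
  have heX : e ∉ X := disjoint_left.1 hFX he
  have hpart : T ∪ X ∪ E \ insert e (T ∪ X) ∪ {e} = E := by
    ext t
    have := @hF t
    have := @hX t
    have := @hT t
    by_cases t = e <;> simp_all; tauto
  rcases h.2.2.2 (T ∪ X) (E \ insert e (T ∪ X)) e
      (disjoint_sdiff_right.mono_right (sdiff_subset_sdiff_right (subset_insert _ _)))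
      (by simp [heT, heX]) (by simp) hpart
    with ⟨_, ⟨v, hv, rfl⟩, hev, hvs⟩ | ⟨_, ⟨w, hw, rfl⟩, hew, hws⟩
  · refine Or.inl ⟨F.indicator v, mem_shadowV.2 ⟨v, hv, fun t ht => ?_, rfl⟩, ?_, ?_⟩
    · rcases hvs ht with (htT | htX) | rfl
      exacts [Or.inl (hT htT), Or.inr htX, Or.inl he]
    · rwa [indicator_of_mem he]
    · rw [support_indicator]
      rintro t ⟨htF, htv⟩
      rcases hvs htv with (htT | htX) | rfl
      exacts [Or.inr htT, absurd htX (disjoint_left.1 hFX htF), Or.inl rfl]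
  · refine Or.inr ⟨F.indicator w, mem_shadowW.2 ⟨w, hw, fun t ht => ?_, rfl⟩, ?_,
      fun t ht => ?_⟩
    · rcases hws ht with ⟨htE, htn⟩ | rfl
      exacts [⟨htE, fun htX => htn (Or.inr (Or.inr htX))⟩, ⟨hF he, heX⟩]
    · rwa [indicator_of_mem he]
    · rw [indicator_of_mem (hT ht)]
      by_contra hwt
      rcases hws hwt with ⟨-, htn⟩ | rfl
      exacts [htn (Or.inr (Or.inl ht)), heT ht]

end Dichotomy

/-- Gaussian elimination against two "triangular" families: the pivots of `Y` clear `b` on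
`S`, and the pivots of `Z` then detect every remaining coordinate of `b` in `F \ S`. -/
theorem mem_of_pivots {F S : Finset α} {Y Z : Submodule k (α → k)} (hY : Y ≤ FunOn ↑F)
    (hYZ : ∀ y ∈ Y, ∀ z ∈ Z, ∑ t ∈ F, y t * z t = 0)
    (hYS : ∀ e ∈ S, ∃ y ∈ Y, y e ≠ 0 ∧ ∀ t ∈ S, t ≠ e → y t = 0)
    (hZS : ∀ e ∈ F, e ∉ S → ∃ z ∈ Z, z e ≠ 0 ∧ ∀ t ∈ F, t ∉ S → t ≠ e → z t = 0)
    {b : α → k} (hb : support b ⊆ F) (hbZ : ∀ z ∈ Z, ∑ t ∈ F, b t * z t = 0) : b ∈ Y := by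
  choose! y hyY hye hyS using hYS
  set c := b - ∑ e ∈ S, (b e / y e e) • y e
  have hbc : b - c ∈ Y := by
    rw [sub_sub_cancel]
    exact Y.sum_mem fun e he => Y.smul_mem _ (hyY e he)
  have hcS : ∀ t ∈ S, c t = 0 := fun t ht => by
    simp only [c, Pi.sub_apply, Finset.sum_apply, Pi.smul_apply, smul_eq_mul]
    rw [Finset.sum_eq_single_of_mem t ht fun e he het => by rw [hyS e he t ht het.symm, mul_zero],
      div_mul_cancel₀ _ (hye t ht), sub_self]
  have hcZ : ∀ z ∈ Z, ∑ t ∈ F, c t * z t = 0 := fun z hz => by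
    have hbcz := hYZ _ hbc z hz
    simpa only [Pi.sub_apply, sub_mul, Finset.sum_sub_distrib, hbZ z hz, zero_sub,
      neg_eq_zero] using hbcz
  have hcF : ∀ t ∈ F, t ∉ S → c t = 0 := fun t htF htS => by
    obtain ⟨z, hz, hzt, hzF⟩ := hZS t htF htS
    have hsum := hcZ z hz
    rw [Finset.sum_eq_single_of_mem t htF fun e heF het => by
      by_cases heS : e ∈ S
      · rw [hcS e heS, zero_mul]
      · rw [hzF e heF heS het, mul_zero]] at hsum
    exact (mul_eq_zero.1 hsum).resolve_right hzt
  have hc0 : c = 0 := by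
    funext t
    by_cases htF : t ∈ F
    · by_cases htS : t ∈ S
      exacts [hcS t htS, hcF t htF htS]
    · have hbt : b t = 0 := notMem_support.1 fun ht => htF (hb ht)
      have hbct : (b - c) t = 0 := notMem_support.1 fun ht => htF (hY hbc ht)
      rwa [Pi.sub_apply, hbt, zero_sub, neg_eq_zero] at hbct
  rwa [hc0, sub_zero] at hbc

section Duality

variable {V W : Submodule k (α → k)} {E X : Set α} {F : Finset α}

/-- The pivot set `S` is a maximal subset of `F` independent for the shadow of `V`. -/
theorem IsPresentationOn.exists_pivots (h : IsPresentationOn E V W) (hF : ↑F ⊆ E)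
    (hX : X ⊆ E) (hFX : Disjoint (↑F) X) :
    ∃ S : Finset α, (∀ e ∈ S, ∃ b ∈ shadowW W E F X, b e ≠ 0 ∧ ∀ t ∈ S, t ≠ e → b t = 0) ∧
      ∀ e ∈ F, e ∉ S → ∃ a ∈ shadowV V F X, a e ≠ 0 ∧ ∀ t ∈ F, t ∉ S → t ≠ e → a t = 0 := by
  classical
  obtain ⟨S, hSmax⟩ := Finset.exists_maximal
    (s := F.powerset.filter fun S : Finset α => PresIndep (shadowV V F X) ↑S)
    ⟨∅, by simp [PresIndep, funext_iff]⟩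
  obtain ⟨hSF, hSind⟩ : S ⊆ F ∧ PresIndep (shadowV V F X) ↑S := by
    simpa using hSmax.prop
  refine ⟨S, fun e heS => ?_, fun e heF heS => ?_⟩
  · rcases h.shadow_dichotomy hF hX hFX (hSF heS) (T := ↑(S.erase e))
      (fun t ht => hSF (Finset.mem_of_mem_erase ht)) (by simp)
      with ⟨a, ha, hae, has⟩ | ⟨b, hb, hbe, hbS⟩
    · refine absurd (hSind a ha (has.trans ?_)) (fun ha0 => hae (by simp [ha0]))
      simp [heS]
    · exact ⟨b, hb, hbe, fun t ht hte => hbS t (by simp [ht, hte])⟩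
  · have hdep : ¬PresIndep (shadowV V F X) ↑(insert e S) := fun hind =>
      heS (hSmax.2 (by simpa [Finset.insert_subset heF hSF] using hind) (Finset.subset_insert e S)
        (Finset.mem_insert_self e S))
    simp only [PresIndep, not_forall] at hdep
    obtain ⟨a, ha, has, ha0⟩ := hdep
    have hae : a e ≠ 0 := fun hae => ha0 <| hSind a ha fun t ht => by
      have ht' := has ht
      simp only [Finset.coe_insert, mem_insert_iff] at ht'
      exact ht'.resolve_left (by rintro rfl; exact ht hae)
    refine ⟨a, ha, hae, fun t _ htS hte => notMem_support.1 fun ht => ?_⟩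
    simpa [hte, htS] using has ht

theorem IsPresentationOn.mem_shadowW_of_orthogonal (h : IsPresentationOn E V W)
    (hF : ↑F ⊆ E) (hX : X ⊆ E) (hFX : Disjoint (↑F) X) {b : α → k} (hb : support b ⊆ F)
    (hbA : ∀ a ∈ shadowV V F X, ∑ t ∈ F, a t * b t = 0) : b ∈ shadowW W E F X := by
  obtain ⟨S, hBS, hAS⟩ := h.exists_pivots hF hX hFX
  refine mem_of_pivots shadowW_le_funOn (fun y hy z hz => ?_) hBS hAS hb
    fun a ha => by simpa only [mul_comm] using hbA a ha
  simpa only [mul_comm] using sum_mul_eq_zero_of_mem_shadow h.2.2.1 hz hy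

theorem IsPresentationOn.mem_shadowV_of_orthogonal (h : IsPresentationOn E V W)
    (hF : ↑F ⊆ E) (hX : X ⊆ E) (hFX : Disjoint (↑F) X) {a : α → k} (ha : support a ⊆ F)
    (haB : ∀ b ∈ shadowW W E F X, ∑ t ∈ F, a t * b t = 0) : a ∈ shadowV V F X := by
  classical
  obtain ⟨S, hBS, hAS⟩ := h.exists_pivots hF hX hFX
  refine mem_of_pivots (S := F \ S) shadowV_le_funOn
    (fun _ hy _ hz => sum_mul_eq_zero_of_mem_shadow h.2.2.1 hy hz)
    (fun e he => ?_) (fun e heF heS => ?_) ha haB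
  · obtain ⟨heF, heS⟩ := Finset.mem_sdiff.1 he
    obtain ⟨a, ha, hae, haS⟩ := hAS e heF heS
    exact ⟨a, ha, hae, fun t ht => haS t (Finset.mem_sdiff.1 ht).1 (Finset.mem_sdiff.1 ht).2⟩
  · have heS' : e ∈ S := by simpa [heF] using heS
    obtain ⟨b, hb, hbe, hbS⟩ := hBS e heS'
    exact ⟨b, hb, hbe, fun t htF htS => hbS t (by simpa [htF] using htS)⟩

end Duality

theorem IsChain.exists_disjoint_of_disjoint_sInter {D : Set α} {c : Set (Set α)}
    (hc : IsChain (· ⊆ ·) c) (hne : c.Nonempty) (hfin : ∀ S ∈ c, (D ∩ S).Finite)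
    (hD : Disjoint D (⋂₀ c)) : ∃ S ∈ c, Disjoint D S := by
  set S₁ := argminOn (fun S => (D ∩ S).ncard) c hne
  have hS₁ : S₁ ∈ c := argminOn_mem _ _ hne
  refine ⟨S₁, hS₁, disjoint_left.2 fun x hxD hxS₁ => ?_⟩
  obtain ⟨S, hS, hxS⟩ : ∃ S ∈ c, x ∉ S := by simpa using disjoint_left.1 hD hxD
  rcases hc.total hS hS₁ with hSS₁ | hS₁S
  · have hlt : (D ∩ S).ncard < (D ∩ S₁).ncard := ncard_lt_ncard
      ⟨inter_subset_inter_right D hSS₁, fun hsub => hxS (hsub ⟨hxD, hxS₁⟩).2⟩ (hfin S₁ hS₁)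
    exact not_lt_argminOn (fun S => (D ∩ S).ncard) c hS hlt
  · exact hxS (hS₁S hxS₁)

theorem MeetsFinitely.mono {W : Submodule k (α → k)} {S T : Set α} (hT : MeetsFinitely W T)
    (hST : S ⊆ T) : MeetsFinitely W S :=
  fun w hw => (hT w hw).subset (inter_subset_inter_right _ hST)

section Zorn

variable {V W : Submodule k (α → k)} {E P S : Set α} {F : Finset α}

theorem funOn_le_span [DecidableEq α] (F : Finset α) :
    FunOn ↑F ≤ Submodule.span k ((fun t => Pi.single t (1 : k)) '' (F : Set α)) := by
  intro v hv
  have hv_eq : v = ∑ t ∈ F, v t • Pi.single t 1 := by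
    funext x
    by_cases hx : x ∈ F
    · simp [Finset.sum_apply, Pi.single_apply, hx]
    · simp [Finset.sum_apply, Pi.single_apply, hx, notMem_support.1 fun h => hx (hv h)]
  rw [hv_eq]
  exact Submodule.sum_mem _ fun t ht =>
    Submodule.smul_mem _ _ (Submodule.subset_span (mem_image_of_mem _ ht))

theorem exists_meetsFinitely_le_shadowV (hVW : ∀ v ∈ V, ∀ w ∈ W, Orthog v w)
    (F : Finset α) (P : Set α) :
    ∃ S ⊆ P, MeetsFinitely W S ∧ shadowV V F P ≤ shadowV V F S := by
  classical
  obtain ⟨G, hG⟩ : (shadowV V F P).FG :=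
    (Submodule.fg_span (F.finite_toSet.image _)).of_le
      (shadowV_le_funOn.trans (funOn_le_span F))
  have hGmem : ∀ g ∈ G, g ∈ shadowV V F P := fun g hg => hG ▸ Submodule.subset_span hg
  choose! rep hrepV hrepP hrepg using fun g hg => mem_shadowV.1 (hGmem g hg)
  refine ⟨⋃ g ∈ G, support (rep g) ∩ P, iUnion₂_subset fun _ _ => inter_subset_right,
    fun w hw => ?_, ?_⟩
  · refine (G.finite_toSet.biUnion fun g hg => (hVW _ (hrepV g hg) w hw).1).subset ?_
    rintro t ⟨htw, htU⟩
    obtain ⟨g, hg, htg, -⟩ := mem_iUnion₂.1 htU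
    exact mem_iUnion₂.2 ⟨g, hg, htg, htw⟩
  · rw [← hG, Submodule.span_le]
    intro g hg
    refine mem_shadowV.2 ⟨rep g, hrepV g hg, fun t ht => ?_, hrepg g hg⟩
    exact (hrepP g hg ht).imp_right fun htP => mem_iUnion₂.2 ⟨g, hg, ht, htP⟩

/-- Subtracting a multiple of `u` kills the coordinate `z` without changing the shadow on `F`. -/
theorem shadowV_le_shadowV_diff_singleton {F : Set α} {u : α → k} (hu : u ∈ V)
    (huS : support u ⊆ S) (hFS : Disjoint F S) {z : α} (hz : u z ≠ 0) :
    shadowV V F S ≤ shadowV V F (S \ {z}) := by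
  intro x hx
  obtain ⟨v, hv, hvs, rfl⟩ := mem_shadowV.1 hx
  refine mem_shadowV.2 ⟨v - (v z / u z) • u, V.sub_mem hv (V.smul_mem _ hu),
    fun t ht => ?_, ?_⟩
  · have htz : t ≠ z := by
      rintro rfl
      exact ht (by simp [div_mul_cancel₀ _ hz])
    rcases support_sub _ _ ht with htv | htu
    · exact (hvs htv).imp_right fun htS => ⟨htS, htz⟩
    · exact Or.inr ⟨huS (support_smul_subset_right _ _ htu), htz⟩
  · have hFu : F.indicator u = 0 := indicator_eq_zero'.2 (hFS.symm.mono_left huS)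
    change indLM F (v - (v z / u z) • u) = indLM F v
    rw [map_sub, map_smul, indLM, LinearMap.coe_mk, AddHom.coe_mk, hFu, smul_zero, sub_zero]

theorem IsPresentationOn.mem_shadowV_sInter (h : IsPresentationOn E V W) (hF : ↑F ⊆ E)
    {c : Set (Set α)} (hc : IsChain (· ⊆ ·) c) (hne : c.Nonempty)
    (hcW : ∀ S ∈ c, MeetsFinitely W S) (hcE : ⋂₀ c ⊆ E) (hcF : Disjoint (↑F) (⋂₀ c))
    {a : α → k} (ha : ∀ S ∈ c, a ∈ shadowV V F S) : a ∈ shadowV V F (⋂₀ c) := by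
  obtain ⟨S₁, hS₁⟩ := hne
  refine h.mem_shadowV_of_orthogonal hF hcE hcF (shadowV_le_funOn (ha S₁ hS₁)) fun b hb => ?_
  obtain ⟨w, hw, hws, rfl⟩ := mem_shadowW.1 hb
  obtain ⟨hwE, hwc⟩ := subset_sdiff.1 hws
  obtain ⟨S, hS, hwS⟩ :=
    hc.exists_disjoint_of_disjoint_sInter ⟨S₁, hS₁⟩ (fun S hS => hcW S hS w hw) hwc
  exact sum_mul_eq_zero_of_mem_shadow h.2.2.1 (ha S hS)
    (mem_shadowW.2 ⟨w, hw, subset_sdiff.2 ⟨hwE, hwS⟩, rfl⟩)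

theorem IsPresentationOn.exists_presIndep_shadow_eq (h : IsPresentationOn E V W)
    (hF : ↑F ⊆ E) (hP : P ⊆ E) (hFP : Disjoint (↑F) P) :
    ∃ P' ⊆ P, PresIndep V P' ∧ shadowV V F P' = shadowV V F P ∧
      shadowW W E F P' = shadowW W E F P := by
  let 𝒮 : Set (Set α) := {S | S ⊆ P ∧ MeetsFinitely W S ∧ shadowV V F P ≤ shadowV V F S}
  have h𝒮 : ∀ c ⊆ 𝒮, IsChain (· ⊆ ·) c → c.Nonempty → ∃ lb ∈ 𝒮, ∀ S ∈ c, lb ⊆ S := by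
    intro c hc𝒮 hc ⟨S₁, hS₁⟩
    have hcP : ⋂₀ c ⊆ P := (sInter_subset_of_mem hS₁).trans (hc𝒮 hS₁).1
    refine ⟨⋂₀ c, ⟨hcP, (hc𝒮 hS₁).2.1.mono (sInter_subset_of_mem hS₁), fun a ha => ?_⟩,
      fun S => sInter_subset_of_mem⟩
    exact h.mem_shadowV_sInter hF hc ⟨S₁, hS₁⟩ (fun S hS => (hc𝒮 hS).2.1)
      (hcP.trans hP) (hFP.mono_right hcP) fun S hS => (hc𝒮 hS).2.2 ha
  obtain ⟨S₀, hS₀P, hS₀W, hS₀A⟩ := exists_meetsFinitely_le_shadowV h.2.2.1 F P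
  obtain ⟨P', -, hmin⟩ := zorn_superset_nonempty 𝒮 h𝒮 S₀ ⟨hS₀P, hS₀W, hS₀A⟩
  obtain ⟨hP'P, hP'W, hP'A⟩ := hmin.prop
  have hA : shadowV V F P' = shadowV V F P := le_antisymm (shadowV_mono hP'P) hP'A
  refine ⟨P', hP'P, fun u hu huP' => ?_, hA, le_antisymm (fun b hb => ?_) (shadowW_anti hP'P)⟩
  · by_contra hu0
    obtain ⟨z, hz⟩ := Function.ne_iff.1 hu0
    have hle := hmin.le_of_le ⟨sdiff_subset.trans hP'P, hP'W.mono sdiff_subset,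
      hP'A.trans (shadowV_le_shadowV_diff_singleton hu huP' (hFP.mono_right hP'P) hz)⟩
      sdiff_subset
    exact (hle (huP' hz)).2 rfl
  · exact h.mem_shadowW_of_orthogonal hF hP hFP (shadowW_le_funOn hb) fun a ha =>
      sum_mul_eq_zero_of_mem_shadow h.2.2.1 (hA ▸ ha) hb

end Zorn

end

/-- Given a presentation `Π` on `E`, a finite `F ⊆ E` and `P ⊆ E`
disjoint from `F`, there is a `Π`-independent `P' ⊆ P` with `(Π/P)↾F = (Π/P')↾F`. -/
theorem exists_indep_contraction_set {α k : Type*} [Field k]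
    (E : Set α) (V W : Submodule k (α → k)) (h : IsPresentationOn E V W)
    (F : Set α) (hF : F ⊆ E) (hFfin : F.Finite)
    (P : Set α) (hP : P ⊆ E) (hFP : Disjoint F P) :
    ∃ P' ⊆ P, PresIndep V P' ∧
      pairRes (pairCon (V, W) (E \ P)) F = pairRes (pairCon (V, W) (E \ P')) F := by
  lift F to Finset α using hFfin
  obtain ⟨P', hP'P, hindep, hA, hB⟩ := h.exists_presIndep_shadow_eq hF hP hFP
  refine ⟨P', hP'P, hindep, ?_⟩
  rw [pairRes_pairCon_eq h.1 hF hFP, pairRes_pairCon_eq h.1 hF (hFP.mono_right hP'P), hA, hB]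
end
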